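/- arXiv:1106.3978 — 4 statements merged into one kernel-verified Lean document; each statement's English description precedes it below -/
import Mathlib

section
/- Let M be a free abelian group of finite rank, V and W subgroups of M, and φ : V → W a group isomorphism. Then an element x of M⊗ℚ belongs to D_φ if and only if all forward iterates of φ_ℚ are defined at x, i.e. if and only if there exists a sequence (y_n)_{n≥0} of elements of V⊗ℚ with y_0 = x and y_{n+1} = φ_ℚ(y_n) for all n ≥ 0. -/
/-!
Setting: `M = ℤ^n` is a free abelian group of finite rank, `V, W` are subgroups of `M`,
and `φ : V ≃+ W` is a group isomorphism.  Inside `M ⊗ ℚ = ℚ^n`, a subgroup `U` of `M`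
is identified with the `ℚ`-subspace `U ⊗ ℚ` spanned by its image, and `φ_ℚ` denotes the
unique `ℚ`-linear extension of `φ` to `V ⊗ ℚ`.
-/

/-- The canonical embedding of `ℤ^n` into `ℚ^n` (i.e. `M → M ⊗ ℚ`). -/
def embQ (n : ℕ) (x : Fin n → ℤ) : Fin n → ℚ := fun i => (x i : ℚ)

lemma embQ_add (n : ℕ) (a b : Fin n → ℤ) : embQ n (a + b) = embQ n a + embQ n b := by
  funext i; simp [embQ]

lemma embQ_inj (n : ℕ) : Function.Injective (embQ n) := by
  intro a b h
  funext i
  have := congrFun h i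
  simpa [embQ] using this

lemma embQ_zero (n : ℕ) : embQ n 0 = 0 := by funext i; simp [embQ]

lemma embQ_zsmul (n : ℕ) (p : ℤ) (a : Fin n → ℤ) : embQ n (p • a) = (p : ℚ) • embQ n a := by
  funext i; simp [embQ]

/-- Clearing denominators: membership in the `ℚ`-span of an additive subgroup. -/
lemma mem_span_addSubgroup_iff {E : Type*} [AddCommGroup E] [Module ℚ E]
    (S : AddSubgroup E) (x : E) :
    x ∈ Submodule.span ℚ (S : Set E) ↔ ∃ p : ℤ, p ≠ 0 ∧ (p : ℚ) • x ∈ S := by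
  constructor
  · intro hx
    induction hx using Submodule.span_induction with
    | mem x h => exact ⟨1, one_ne_zero, by simpa using h⟩
    | zero => exact ⟨1, one_ne_zero, by simpa using S.zero_mem⟩
    | add x y hx hy ihx ihy =>
      obtain ⟨p, hp, hpx⟩ := ihx
      obtain ⟨q, hq, hqy⟩ := ihy
      refine ⟨p * q, mul_ne_zero hp hq, ?_⟩
      have h1 : ((p * q : ℤ) : ℚ) • (x + y) = (q : ℚ) • ((p : ℚ) • x) + (p : ℚ) • ((q : ℚ) • y) := by
        push_cast
        module
      rw [h1]
      exact S.add_mem (by rw [Int.cast_smul_eq_zsmul]; exact S.zsmul_mem hpx q)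
        (by rw [Int.cast_smul_eq_zsmul]; exact S.zsmul_mem hqy p)
    | smul a x hx ihx =>
      obtain ⟨p, hp, hpx⟩ := ihx
      refine ⟨(a.den : ℤ) * p, mul_ne_zero (Int.natCast_ne_zero.mpr a.den_nz) hp, ?_⟩
      have h1 : (((a.den : ℤ) * p : ℤ) : ℚ) • (a • x) = (a.num : ℚ) • ((p : ℚ) • x) := by
        push_cast
        rw [smul_smul, smul_smul]
        congr 1
        linear_combination p * (Rat.mul_den_eq_num a)
      rw [h1, Int.cast_smul_eq_zsmul ℚ a.num]
      exact S.zsmul_mem hpx a.num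
  · rintro ⟨p, hp, hpx⟩
    have hp' : (p : ℚ) ≠ 0 := Int.cast_ne_zero.mpr hp
    have := Submodule.smul_mem (Submodule.span ℚ (S : Set E)) (p : ℚ)⁻¹
      (Submodule.subset_span hpx)
    rwa [inv_smul_smul₀ hp'] at this


/-- `U ⊗ ℚ`, the `ℚ`-subspace of `ℚ^n` spanned by the image of a subgroup `U` of `ℤ^n`. -/
def qSpan (n : ℕ) (U : AddSubgroup (Fin n → ℤ)) : Submodule ℚ (Fin n → ℚ) :=
  Submodule.span ℚ (embQ n '' (U : Set (Fin n → ℤ)))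

/-- `RelQ V W φ x y` expresses that `x ∈ V ⊗ ℚ` and `φ_ℚ (x) = y`, where `φ_ℚ` is the
unique `ℚ`-linear extension of `φ : V ≃+ W`: there is a nonzero integer `p` clearing the
denominators of `x`, with `p • x ∈ V` and `φ (p • x) = p • y`. -/
def RelQ {n : ℕ} (V W : AddSubgroup (Fin n → ℤ)) (φ : V ≃+ W)
    (x y : Fin n → ℚ) : Prop :=
  ∃ p : ℤ, p ≠ 0 ∧ ∃ v : V, embQ n (v : Fin n → ℤ) = p • x ∧
    embQ n ((φ v : W) : Fin n → ℤ) = p • y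

/-- `embQ` as an additive group homomorphism. -/
def embQHom (n : ℕ) : (Fin n → ℤ) →+ (Fin n → ℚ) where
  toFun := embQ n
  map_zero' := by funext i; simp [embQ]
  map_add' := embQ_add n

lemma mem_qSpan_iff {n : ℕ} (U : AddSubgroup (Fin n → ℤ)) (x : Fin n → ℚ) :
    x ∈ qSpan n U ↔ ∃ p : ℤ, p ≠ 0 ∧ ∃ u : U, embQ n (u : Fin n → ℤ) = (p : ℚ) • x := by
  have hs : embQ n '' (U : Set (Fin n → ℤ)) = ((U.map (embQHom n) : AddSubgroup _) : Set _) := by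
    ext z
    simp [AddSubgroup.mem_map, embQHom]
  rw [qSpan, hs, mem_span_addSubgroup_iff]
  constructor
  · rintro ⟨p, hp, hmem⟩
    rw [AddSubgroup.mem_map] at hmem
    obtain ⟨u, hu, heq⟩ := hmem
    exact ⟨p, hp, ⟨u, hu⟩, heq⟩
  · rintro ⟨p, hp, ⟨u, hu⟩, heq⟩
    exact ⟨p, hp, AddSubgroup.mem_map.mpr ⟨u, hu, heq⟩⟩

lemma qSpan_mono {n : ℕ} {U U' : AddSubgroup (Fin n → ℤ)} (h : U ≤ U') :
    qSpan n U ≤ qSpan n U' :=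
  Submodule.span_mono (Set.image_mono h)

lemma qSpan_inf {n : ℕ} (V W : AddSubgroup (Fin n → ℤ)) :
    qSpan n V ⊓ qSpan n W ≤ qSpan n (V ⊓ W) := by
  rintro x ⟨hxV, hxW⟩
  obtain ⟨p, hp, v, hv⟩ := (mem_qSpan_iff V x).mp hxV
  obtain ⟨q, hq, w, hw⟩ := (mem_qSpan_iff W x).mp hxW
  have key : q • (v : Fin n → ℤ) = p • (w : Fin n → ℤ) := by
    apply embQ_inj n
    rw [embQ_zsmul, embQ_zsmul, hv, hw, smul_smul, smul_smul, mul_comm]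
  refine (mem_qSpan_iff (V ⊓ W) x).mpr ⟨p * q, mul_ne_zero hp hq, ⟨q • (v : Fin n → ℤ), ?_⟩, ?_⟩
  · refine ⟨V.zsmul_mem v.2 q, ?_⟩
    rw [key]
    exact W.zsmul_mem w.2 p
  · show embQ n (q • (v : Fin n → ℤ)) = ((p * q : ℤ) : ℚ) • x
    rw [embQ_zsmul, hv, smul_smul]
    push_cast
    ring_nf

section Graph

variable {n : ℕ} (V W : AddSubgroup (Fin n → ℤ)) (φ : V ≃+ W)

/-- The map `v ↦ (v, φ v)` landing in `ℚ^n × ℚ^n`, as an additive hom. -/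
def genHom : V →+ (Fin n → ℚ) × (Fin n → ℚ) :=
  AddMonoidHom.prod ((embQHom n).comp V.subtype)
    (((embQHom n).comp W.subtype).comp φ.toAddMonoidHom)

lemma genHom_apply (v : V) :
    genHom V W φ v = (embQ n (v : Fin n → ℤ), embQ n ((φ v : W) : Fin n → ℤ)) := rfl

/-- The graph of `φ_ℚ` as a `ℚ`-subspace of `ℚ^n × ℚ^n`. -/
def GSub : Submodule ℚ ((Fin n → ℚ) × (Fin n → ℚ)) :=
  Submodule.span ℚ (((genHom V W φ).range : AddSubgroup _) : Set _)

lemma memG_iff (x y : Fin n → ℚ) :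
    (x, y) ∈ GSub V W φ ↔ RelQ V W φ x y := by
  rw [GSub, mem_span_addSubgroup_iff]
  constructor
  · rintro ⟨p, hp, hmem⟩
    rw [AddMonoidHom.mem_range] at hmem
    obtain ⟨v, hv⟩ := hmem
    rw [genHom_apply] at hv
    simp only [Prod.smul_mk, Prod.ext_iff] at hv
    refine ⟨p, hp, v, ?_, ?_⟩
    · rw [← Int.cast_smul_eq_zsmul ℚ]; exact hv.1
    · rw [← Int.cast_smul_eq_zsmul ℚ]; exact hv.2
  · rintro ⟨p, hp, v, h1, h2⟩
    refine ⟨p, hp, AddMonoidHom.mem_range.mpr ⟨v, ?_⟩⟩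
    rw [genHom_apply]
    simp only [Prod.smul_mk, Prod.ext_iff]
    rw [← Int.cast_smul_eq_zsmul ℚ] at h1 h2
    exact ⟨h1, h2⟩

end Graph

section Struct

open Submodule

variable {n : ℕ} (V W : AddSubgroup (Fin n → ℤ)) (φ : V ≃+ W)

/-- first projection -/
noncomputable abbrev P1 (n : ℕ) : ((Fin n → ℚ) × (Fin n → ℚ)) →ₗ[ℚ] (Fin n → ℚ) :=
  LinearMap.fst ℚ _ _

noncomputable abbrev P2 (n : ℕ) : ((Fin n → ℚ) × (Fin n → ℚ)) →ₗ[ℚ] (Fin n → ℚ) :=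
  LinearMap.snd ℚ _ _

lemma map_fst_G : Submodule.map (P1 n) (GSub V W φ) = qSpan n V := by
  rw [GSub, Submodule.map_span, qSpan]
  congr 1
  ext z
  constructor
  · rintro ⟨w, hw, rfl⟩
    rw [SetLike.mem_coe, AddMonoidHom.mem_range] at hw
    obtain ⟨v, rfl⟩ := hw
    exact ⟨v, v.2, rfl⟩
  · rintro ⟨a, ha, rfl⟩
    exact ⟨genHom V W φ ⟨a, ha⟩, AddMonoidHom.mem_range.mpr ⟨⟨a, ha⟩, rfl⟩, rfl⟩

lemma map_snd_G : Submodule.map (P2 n) (GSub V W φ) = qSpan n W := by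
  rw [GSub, Submodule.map_span, qSpan]
  congr 1
  ext z
  constructor
  · rintro ⟨w, hw, rfl⟩
    rw [SetLike.mem_coe, AddMonoidHom.mem_range] at hw
    obtain ⟨v, rfl⟩ := hw
    exact ⟨φ v, (φ v).2, rfl⟩
  · rintro ⟨b, hb, rfl⟩
    refine ⟨genHom V W φ (φ.symm ⟨b, hb⟩), AddMonoidHom.mem_range.mpr ⟨φ.symm ⟨b, hb⟩, rfl⟩, ?_⟩
    show embQ n ((φ (φ.symm ⟨b, hb⟩) : W) : Fin n → ℤ) = embQ n b
    rw [φ.apply_symm_apply]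

lemma G_snd_zero {y : Fin n → ℚ} (h : ((0 : Fin n → ℚ), y) ∈ GSub V W φ) : y = 0 := by
  obtain ⟨p, hp, v, h1, h2⟩ := (memG_iff V W φ 0 y).mp h
  rw [smul_zero] at h1
  have hv : (v : Fin n → ℤ) = 0 := embQ_inj n (by rw [h1, embQ_zero])
  have hv0 : v = 0 := Subtype.ext hv
  rw [hv0, AddEquiv.map_zero φ] at h2
  have : (p : ℚ) • y = 0 := by
    rw [Int.cast_smul_eq_zsmul, ← h2]
    show embQ n ((0 : W) : Fin n → ℤ) = 0
    rw [ZeroMemClass.coe_zero, embQ_zero]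
  rcases smul_eq_zero.mp this with h | h
  · exact absurd (by exact_mod_cast h) hp
  · exact h

lemma G_fst_zero {x : Fin n → ℚ} (h : (x, (0 : Fin n → ℚ)) ∈ GSub V W φ) : x = 0 := by
  obtain ⟨p, hp, v, h1, h2⟩ := (memG_iff V W φ x 0).mp h
  rw [smul_zero] at h2
  have hφv : ((φ v : W) : Fin n → ℤ) = 0 := embQ_inj n (by rw [h2, embQ_zero])
  have : φ v = 0 := Subtype.ext hφv
  have hv : v = 0 := by
    have := congrArg φ.symm this
    rwa [φ.symm_apply_apply, AddEquiv.map_zero φ.symm] at this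
  rw [hv, ZeroMemClass.coe_zero, embQ_zero] at h1
  have : (p : ℚ) • x = 0 := by rw [Int.cast_smul_eq_zsmul, ← h1]
  rcases smul_eq_zero.mp this with h | h
  · exact absurd (by exact_mod_cast h) hp
  · exact h

lemma G_uniq {x y y' : Fin n → ℚ} (h : (x, y) ∈ GSub V W φ) (h' : (x, y') ∈ GSub V W φ) :
    y = y' := by
  have : ((x, y) - (x, y') : (Fin n → ℚ) × (Fin n → ℚ)) ∈ GSub V W φ :=
    Submodule.sub_mem _ h h'
  have h0 : ((0 : Fin n → ℚ), y - y') ∈ GSub V W φ := by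
    simpa [Prod.mk_sub_mk, sub_self] using this
  have := G_snd_zero V W φ h0
  exact sub_eq_zero.mp this

end Struct

section Finrank

open Submodule Module

variable {n : ℕ} (V W : AddSubgroup (Fin n → ℤ)) (φ : V ≃+ W)

lemma finrank_map_fst (H : Submodule ℚ ((Fin n → ℚ) × (Fin n → ℚ))) (hH : H ≤ GSub V W φ) :
    finrank ℚ (Submodule.map (P1 n) H) = finrank ℚ H := by
  set f : H →ₗ[ℚ] (Fin n → ℚ) := (P1 n).comp H.subtype with hf
  have hinj : Function.Injective f := by
    intro a b hab
    apply Subtype.ext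
    have hsub : (a : (Fin n → ℚ) × (Fin n → ℚ)) - b ∈ GSub V W φ :=
      hH (H.sub_mem a.2 b.2)
    have h1 : ((a : (Fin n → ℚ) × (Fin n → ℚ)) - b).1 = 0 := by
      simp only [Prod.fst_sub, sub_eq_zero]
      exact hab
    have h0 : ((0 : Fin n → ℚ), ((a : (Fin n → ℚ) × (Fin n → ℚ)) - b).2) ∈ GSub V W φ := by
      rw [← h1]
      exact hsub
    have h2 := G_snd_zero V W φ h0
    have : (a : (Fin n → ℚ) × (Fin n → ℚ)) - b = 0 := Prod.ext h1 h2
    exact sub_eq_zero.mp this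
  have hrange : LinearMap.range f = Submodule.map (P1 n) H := by
    rw [hf, LinearMap.range_comp, Submodule.range_subtype]
  rw [← hrange, LinearMap.finrank_range_of_inj hinj]

lemma finrank_map_snd (H : Submodule ℚ ((Fin n → ℚ) × (Fin n → ℚ))) (hH : H ≤ GSub V W φ) :
    finrank ℚ (Submodule.map (P2 n) H) = finrank ℚ H := by
  set f : H →ₗ[ℚ] (Fin n → ℚ) := (P2 n).comp H.subtype with hf
  have hinj : Function.Injective f := by
    intro a b hab
    apply Subtype.ext
    have hsub : (a : (Fin n → ℚ) × (Fin n → ℚ)) - b ∈ GSub V W φ :=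
      hH (H.sub_mem a.2 b.2)
    have h2 : ((a : (Fin n → ℚ) × (Fin n → ℚ)) - b).2 = 0 := by
      simp only [Prod.snd_sub, sub_eq_zero]
      exact hab
    have h0 : (((a : (Fin n → ℚ) × (Fin n → ℚ)) - b).1, (0 : Fin n → ℚ)) ∈ GSub V W φ := by
      rw [← h2]
      exact hsub
    have h1 := G_fst_zero V W φ h0
    have : (a : (Fin n → ℚ) × (Fin n → ℚ)) - b = 0 := Prod.ext h1 h2
    exact sub_eq_zero.mp this
  have hrange : LinearMap.range f = Submodule.map (P2 n) H := by
    rw [hf, LinearMap.range_comp, Submodule.range_subtype]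
  rw [← hrange, LinearMap.finrank_range_of_inj hinj]

/-- The preimage operator `U ↦ φ_ℚ⁻¹(U)` (within the domain). -/
noncomputable def Phifwd (U : Submodule ℚ (Fin n → ℚ)) : Submodule ℚ (Fin n → ℚ) :=
  Submodule.map (P1 n) (GSub V W φ ⊓ Submodule.comap (P2 n) U)

/-- The image operator `U ↦ φ_ℚ(U ∩ dom)`. -/
noncomputable def Phibwd (U : Submodule ℚ (Fin n → ℚ)) : Submodule ℚ (Fin n → ℚ) :=
  Submodule.map (P2 n) (GSub V W φ ⊓ Submodule.comap (P1 n) U)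

lemma mem_Phifwd {U : Submodule ℚ (Fin n → ℚ)} {x : Fin n → ℚ} :
    x ∈ Phifwd V W φ U ↔ ∃ y, y ∈ U ∧ (x, y) ∈ GSub V W φ := by
  constructor
  · rintro ⟨z, ⟨hzG, hz2⟩, rfl⟩
    exact ⟨z.2, hz2, hzG⟩
  · rintro ⟨y, hy, hxy⟩
    exact ⟨(x, y), ⟨hxy, hy⟩, rfl⟩

lemma mem_Phibwd {U : Submodule ℚ (Fin n → ℚ)} {y : Fin n → ℚ} :
    y ∈ Phibwd V W φ U ↔ ∃ x, x ∈ U ∧ (x, y) ∈ GSub V W φ := by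
  constructor
  · rintro ⟨z, ⟨hzG, hz1⟩, rfl⟩
    exact ⟨z.1, hz1, hzG⟩
  · rintro ⟨x, hx, hxy⟩
    exact ⟨(x, y), ⟨hxy, hx⟩, rfl⟩

lemma Phifwd_mono {U U' : Submodule ℚ (Fin n → ℚ)} (h : U ≤ U') :
    Phifwd V W φ U ≤ Phifwd V W φ U' :=
  Submodule.map_mono (inf_le_inf_left _ (Submodule.comap_mono h))

lemma Phibwd_mono {U U' : Submodule ℚ (Fin n → ℚ)} (h : U ≤ U') :
    Phibwd V W φ U ≤ Phibwd V W φ U' :=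
  Submodule.map_mono (inf_le_inf_left _ (Submodule.comap_mono h))

lemma Phifwd_le_dom (U : Submodule ℚ (Fin n → ℚ)) : Phifwd V W φ U ≤ qSpan n V := by
  rw [← map_fst_G V W φ]
  exact Submodule.map_mono inf_le_left

lemma Phibwd_le_ran (U : Submodule ℚ (Fin n → ℚ)) : Phibwd V W φ U ≤ qSpan n W := by
  rw [← map_snd_G V W φ]
  exact Submodule.map_mono inf_le_left

/-- If `S` is contained in the domain of `φ_ℚ`, then `φ_ℚ(S)` has the same dimension. -/
lemma finrank_Phibwd (S : Submodule ℚ (Fin n → ℚ)) (hS : S ≤ qSpan n V) :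
    finrank ℚ (Phibwd V W φ S) = finrank ℚ S := by
  have h1 : Submodule.map (P1 n) (GSub V W φ ⊓ Submodule.comap (P1 n) S) = S := by
    apply le_antisymm
    · rintro _ ⟨z, ⟨_, hz1⟩, rfl⟩
      exact hz1
    · intro z hz
      have : z ∈ Submodule.map (P1 n) (GSub V W φ) := by
        rw [map_fst_G V W φ]; exact hS hz
      obtain ⟨w, hwG, hw1⟩ := this
      refine Submodule.mem_map.mpr ⟨w, Submodule.mem_inf.mpr ⟨hwG, ?_⟩, hw1⟩
      show (P1 n) w ∈ S
      rwa [hw1]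
  rw [Phibwd, finrank_map_snd V W φ _ inf_le_left]
  conv_rhs => rw [← h1, finrank_map_fst V W φ _ inf_le_left]

/-- A decreasing sequence of subspaces of `ℚ^n` has two consecutive equal terms. -/
lemma stab (f : ℕ → Submodule ℚ (Fin n → ℚ)) (hdec : ∀ k, f (k + 1) ≤ f k) :
    ∃ N, f (N + 1) = f N := by
  by_contra h
  push_neg at h
  have hlt : ∀ k, finrank ℚ (f (k + 1)) < finrank ℚ (f k) := by
    intro k
    refine lt_of_le_of_ne (Submodule.finrank_mono (hdec k)) fun heq => h k ?_
    exact Submodule.eq_of_le_of_finrank_le (hdec k) heq.ge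
  have key : ∀ k, finrank ℚ (f k) + k ≤ finrank ℚ (f 0) := by
    intro k
    induction k with
    | zero => simp
    | succ k ih => have := hlt k; omega
  have := key (finrank ℚ (f 0) + 1)
  omega

end Finrank


/-- `D_φ`: the set of `x ∈ (V ∩ W) ⊗ ℚ` admitting a full backward orbit
`(x_k)_{k ≥ 0}` under `φ_ℚ` inside `(V ∩ W) ⊗ ℚ`, i.e. `x_0 = x` and
`φ_ℚ (x_{k+1}) = x_k` for all `k`. -/
def DSet {n : ℕ} (V W : AddSubgroup (Fin n → ℤ)) (φ : V ≃+ W) : Set (Fin n → ℚ) :=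
  {x | ∃ xs : ℕ → (Fin n → ℚ), xs 0 = x ∧ (∀ k, xs k ∈ qSpan n (V ⊓ W)) ∧
      ∀ k, RelQ V W φ (xs (k + 1)) (xs k)}


/-- Proposition 7.1(1), second half: an element `x` of `M ⊗ ℚ` belongs to `D_φ` if and
only if all forward iterates of `φ_ℚ` are defined at `x`, i.e. iff there is a sequence
`(y_k)` in `V ⊗ ℚ` with `y_0 = x` and `y_{k+1} = φ_ℚ (y_k)` for all `k`. -/
theorem statement1 (n : ℕ) (V W : AddSubgroup (Fin n → ℤ)) (φ : V ≃+ W)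
    (x : Fin n → ℚ) :
    x ∈ DSet V W φ ↔
      ∃ ys : ℕ → (Fin n → ℚ), ys 0 = x ∧ ∀ k, RelQ V W φ (ys k) (ys (k + 1)) := by
  constructor
  · -- membership in `D_φ` implies all forward iterates are defined
    rintro ⟨xs, hxs0, hmemQ, hrel⟩
    have hG : ∀ k, (xs (k + 1), xs k) ∈ GSub V W φ := fun k => (memG_iff V W φ _ _).mpr (hrel k)
    let F : ℕ → Submodule ℚ (Fin n → ℚ) := fun k =>
      Nat.rec (motive := fun _ => Submodule ℚ (Fin n → ℚ)) (qSpan n (V ⊓ W))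
        (fun _ Fk => Phibwd V W φ Fk ⊓ qSpan n (V ⊓ W)) k
    have hF0 : F 0 = qSpan n (V ⊓ W) := rfl
    have hFs : ∀ k, F (k + 1) = Phibwd V W φ (F k) ⊓ qSpan n (V ⊓ W) := fun _ => rfl
    have hFdec : ∀ k, F (k + 1) ≤ F k := by
      intro k
      induction k with
      | zero => rw [hFs, hF0]; exact inf_le_right
      | succ k ih => rw [hFs (k + 1), hFs k]; exact inf_le_inf (Phibwd_mono V W φ ih) le_rfl
    obtain ⟨N, hN⟩ := stab F hFdec
    have hFle0 : ∀ k, F k ≤ F 0 := by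
      intro k
      induction k with
      | zero => exact le_rfl
      | succ k ih => exact (hFdec k).trans ih
    set T := F N with hT
    have hTfix : Phibwd V W φ T ⊓ qSpan n (V ⊓ W) = T := (hFs N).symm.trans hN
    have hTQ : T ≤ qSpan n (V ⊓ W) := hF0 ▸ hFle0 N
    have hTV : T ≤ qSpan n V := hTQ.trans (qSpan_mono inf_le_left)
    have hTbwd : T ≤ Phibwd V W φ T := (le_of_eq hTfix.symm).trans inf_le_left
    have hTeq : T = Phibwd V W φ T :=
      Submodule.eq_of_le_of_finrank_le hTbwd (le_of_eq (finrank_Phibwd V W φ T hTV))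
    have hfwd : ∀ z : Fin n → ℚ, z ∈ T → ∃ y, y ∈ T ∧ (z, y) ∈ GSub V W φ := by
      intro z hz
      have hzdom : z ∈ Submodule.map (P1 n) (GSub V W φ) := by
        rw [map_fst_G]; exact hTV hz
      obtain ⟨w, hwG, hw1⟩ := Submodule.mem_map.mp hzdom
      have hwpair : (z, w.2) ∈ GSub V W φ := by rw [← hw1]; exact hwG
      refine ⟨w.2, ?_, hwpair⟩
      rw [hTeq]
      exact (mem_Phibwd V W φ).mpr ⟨z, hz, hwpair⟩
    have hxsF : ∀ k j, xs j ∈ F k := by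
      intro k
      induction k with
      | zero => intro j; rw [hF0]; exact hmemQ j
      | succ k ih =>
        intro j
        rw [hFs]
        exact Submodule.mem_inf.mpr
          ⟨(mem_Phibwd V W φ).mpr ⟨xs (j + 1), ih (j + 1), hG j⟩, hmemQ j⟩
    have hxT : x ∈ T := hxs0 ▸ hxsF N 0
    let g : T → T := fun z => ⟨(hfwd z z.2).choose, (hfwd z z.2).choose_spec.1⟩
    refine ⟨fun k => ((g^[k] ⟨x, hxT⟩ : T) : Fin n → ℚ), rfl, fun k => ?_⟩
    rw [← memG_iff]
    simp only [Function.iterate_succ_apply']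
    exact (hfwd _ (g^[k] ⟨x, hxT⟩).2).choose_spec.2
  · -- all forward iterates defined implies membership in `D_φ`
    rintro ⟨ys, hys0, hrel⟩
    have hG : ∀ k, (ys k, ys (k + 1)) ∈ GSub V W φ := fun k => (memG_iff V W φ _ _).mpr (hrel k)
    let E : ℕ → Submodule ℚ (Fin n → ℚ) := fun k =>
      Nat.rec (motive := fun _ => Submodule ℚ (Fin n → ℚ)) (qSpan n V)
        (fun _ Ek => Phifwd V W φ Ek) k
    have hE0 : E 0 = qSpan n V := rfl
    have hEs : ∀ k, E (k + 1) = Phifwd V W φ (E k) := fun _ => rfl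
    have hEdec : ∀ k, E (k + 1) ≤ E k := by
      intro k
      induction k with
      | zero => rw [hEs, hE0]; exact Phifwd_le_dom V W φ _
      | succ k ih => rw [hEs (k + 1), hEs k]; exact Phifwd_mono V W φ ih
    obtain ⟨N, hN⟩ := stab E hEdec
    set S := E N with hS
    have hSfix : Phifwd V W φ S = S := (hEs N).symm.trans hN
    have hSV : S ≤ qSpan n V := by rw [← hSfix]; exact Phifwd_le_dom V W φ S
    have hfwdS : ∀ z, z ∈ S → ∃ y, y ∈ S ∧ (z, y) ∈ GSub V W φ := by
      intro z hz
      rw [← hSfix] at hz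
      exact (mem_Phifwd V W φ).mp hz
    have hbwdle : Phibwd V W φ S ≤ S := by
      intro y' hy'
      obtain ⟨z, hzS, hzy'⟩ := (mem_Phibwd V W φ).mp hy'
      obtain ⟨y, hyS, hzy⟩ := hfwdS z hzS
      rwa [G_uniq V W φ hzy' hzy]
    haveI : FiniteDimensional ℚ (↥S) := FiniteDimensional.finiteDimensional_submodule S
    have hSbwd : Phibwd V W φ S = S :=
      Submodule.eq_of_le_of_finrank_le hbwdle (finrank_Phibwd V W φ S hSV).ge
    have hSW : S ≤ qSpan n W := by rw [← hSbwd]; exact Phibwd_le_ran V W φ S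
    have hSVW : S ≤ qSpan n (V ⊓ W) := fun z hz =>
      qSpan_inf V W (Submodule.mem_inf.mpr ⟨hSV hz, hSW hz⟩)
    have hsurj : ∀ z, z ∈ S → ∃ y, y ∈ S ∧ (y, z) ∈ GSub V W φ := by
      intro z hz
      rw [← hSbwd] at hz
      exact (mem_Phibwd V W φ).mp hz
    have hysE : ∀ k j, ys j ∈ E k := by
      intro k
      induction k with
      | zero =>
        intro j
        rw [hE0, ← map_fst_G V W φ]
        exact Submodule.mem_map.mpr ⟨(ys j, ys (j + 1)), hG j, rfl⟩
      | succ k ih =>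
        intro j
        rw [hEs]
        exact (mem_Phifwd V W φ).mpr ⟨ys (j + 1), ih (j + 1), hG j⟩
    have hxS : x ∈ S := hys0 ▸ hysE N 0
    let g : S → S := fun z => ⟨(hsurj z z.2).choose, (hsurj z z.2).choose_spec.1⟩
    refine ⟨fun k => ((g^[k] ⟨x, hxS⟩ : S) : Fin n → ℚ), rfl,
      fun k => hSVW (g^[k] ⟨x, hxS⟩).2, fun k => ?_⟩
    rw [← memG_iff]
    simp only [Function.iterate_succ_apply']
    exact (hsurj _ (g^[k] ⟨x, hxS⟩).2).choose_spec.2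
end

section
/- Let M be a free abelian group of finite rank. Let V, V' be subgroups of M that are commensurable (i.e. V∩V' has finite index in both V and V'), let φ : V → W and φ' : V' → W' be group isomorphisms onto subgroups W, W' of M, and assume that φ and φ' agree on V∩V'. Then D_φ = D_{φ'} and φ̃ = φ̃'. -/
/-!
Passing to a nonzero multiple does not change `φ_ℚ`, nor the `ℚ`-span of a subgroup. If
`k = [V : V ∩ V']`, then `k • v ∈ V ∩ V'` for every `v ∈ V`, and there `φ` and `φ'` agree; so
every relation `φ_ℚ x = y` is witnessed through `φ'` as well, and `(V ∩ W) ⊗ ℚ ⊆ (V' ∩ W') ⊗ ℚ`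
because `k • φ v = φ' (k • v) ∈ W'`. By symmetry, the backward orbits defining `D_φ` and
`D_{φ'}` are the same sequences.
-/

lemma embQ_nsmul (n k : ℕ) (u : Fin n → ℤ) : embQ n (k • u) = k • embQ n u := by
  funext i
  simp [embQ]

lemma qSpan_le_of_forall_exists_nsmul_mem {n : ℕ} {U U' : AddSubgroup (Fin n → ℤ)}
    (h : ∀ u ∈ U, ∃ k : ℕ, k ≠ 0 ∧ k • u ∈ U') : qSpan n U ≤ qSpan n U' := by
  rw [qSpan, Submodule.span_le]
  rintro _ ⟨u, hu, rfl⟩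
  obtain ⟨k, hk, hku⟩ := h u hu
  have hu_eq : embQ n u = (k : ℚ)⁻¹ • embQ n (k • u) := by
    rw [embQ_nsmul, ← Nat.cast_smul_eq_nsmul ℚ, smul_smul, inv_mul_cancel₀ (by exact_mod_cast hk),
      one_smul]
  rw [hu_eq]
  exact Submodule.smul_mem _ _ (Submodule.subset_span ⟨_, hku, rfl⟩)

section Agree

variable {n : ℕ} {V W V' W' : AddSubgroup (Fin n → ℤ)}

def EqOnInf (φ : V ≃+ W) (φ' : V' ≃+ W') : Prop :=
  ∀ (v : Fin n → ℤ) (hv : v ∈ V) (hv' : v ∈ V'),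
    ((φ ⟨v, hv⟩ : W) : Fin n → ℤ) = ((φ' ⟨v, hv'⟩ : W') : Fin n → ℤ)

variable {φ : V ≃+ W} {φ' : V' ≃+ W'}

lemma EqOnInf.symm (h : EqOnInf φ φ') : EqOnInf φ' φ :=
  fun v hv' hv => (h v hv hv').symm

lemma EqOnInf.exists_nsmul_relIndex (h : EqOnInf φ φ') (v : V) :
    ∃ v' : V', (v' : Fin n → ℤ) = (V ⊓ V').relIndex V • (v : Fin n → ℤ) ∧
      ((φ' v' : W') : Fin n → ℤ) = (V ⊓ V').relIndex V • ((φ v : W) : Fin n → ℤ) := by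
  have hk := (V ⊓ V').nsmul_relIndex_mem v.2
  refine ⟨⟨_, hk.2⟩, rfl, ?_⟩
  rw [← h _ hk.1 hk.2]
  exact congrArg (fun w : W => (w : Fin n → ℤ)) (map_nsmul φ _ v)

lemma RelQ.of_eqOnInf (hV : (V ⊓ V').relIndex V ≠ 0) (h : EqOnInf φ φ') {x y : Fin n → ℚ}
    (hxy : RelQ V W φ x y) : RelQ V' W' φ' x y := by
  obtain ⟨p, hp, v, hvx, hvy⟩ := hxy
  obtain ⟨v', hv', hφv'⟩ := h.exists_nsmul_relIndex v
  refine ⟨(V ⊓ V').relIndex V * p, mul_ne_zero (by exact_mod_cast hV) hp, v', ?_, ?_⟩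
  · rw [hv', embQ_nsmul, hvx, mul_smul, natCast_zsmul]
  · rw [hφv', embQ_nsmul, hvy, mul_smul, natCast_zsmul]

lemma qSpan_inf_le_of_eqOnInf (hV : (V ⊓ V').relIndex V ≠ 0) (h : EqOnInf φ φ') :
    qSpan n (V ⊓ W) ≤ qSpan n (V' ⊓ W') := by
  refine qSpan_le_of_forall_exists_nsmul_mem fun u ⟨huV, huW⟩ => ⟨_, hV, ?_, ?_⟩
  · exact ((V ⊓ V').nsmul_relIndex_mem huV).2
  · obtain ⟨v', -, hφv'⟩ := h.exists_nsmul_relIndex (φ.symm ⟨u, huW⟩)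
    rw [AddEquiv.apply_symm_apply] at hφv'
    exact hφv' ▸ (φ' v').2

lemma DSet_subset_of_eqOnInf (hV : (V ⊓ V').relIndex V ≠ 0) (h : EqOnInf φ φ') :
    DSet V W φ ⊆ DSet V' W' φ' := fun _ ⟨xs, h0, hspan, hrel⟩ =>
  ⟨xs, h0, fun k => qSpan_inf_le_of_eqOnInf hV h (hspan k), fun k => (hrel k).of_eqOnInf hV h⟩

end Agree

/-- Proposition 7.1(3): if `V` and `V'` are commensurable subgroups of `M` (i.e. `V ∩ V'`
has finite index in both `V` and `V'`) and the isomorphisms `φ : V → W`, `φ' : V' → W'`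
agree on `V ∩ V'`, then `D_φ = D_{φ'}` and `φ̃ = φ̃'`. -/
theorem statement3 (n : ℕ) (V W V' W' : AddSubgroup (Fin n → ℤ))
    (φ : V ≃+ W) (φ' : V' ≃+ W')
    (hVfin : (V ⊓ V').relIndex V ≠ 0) (hV'fin : (V ⊓ V').relIndex V' ≠ 0)
    (hagree : ∀ (v : Fin n → ℤ) (hv : v ∈ V) (hv' : v ∈ V'),
      ((φ ⟨v, hv⟩ : W) : Fin n → ℤ) = ((φ' ⟨v, hv'⟩ : W') : Fin n → ℤ)) :
    DSet V W φ = DSet V' W' φ' ∧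
      ∀ x y : Fin n → ℚ, x ∈ DSet V W φ →
        (RelQ V W φ x y ↔ RelQ V' W' φ' x y) := by
  have h : EqOnInf φ φ' := hagree
  have hV' : (V' ⊓ V).relIndex V' ≠ 0 := by rwa [inf_comm]
  exact ⟨(DSet_subset_of_eqOnInf hVfin h).antisymm (DSet_subset_of_eqOnInf hV' h.symm),
    fun x y _ => ⟨RelQ.of_eqOnInf hVfin h, RelQ.of_eqOnInf hV' h.symm⟩⟩
end

section
/- Let M be a free abelian group of finite rank, V and W subgroups of M, and φ : V → W a group isomorphism. For an element x of M, the image of x in M⊗ℚ belongs to D_φ if and only if for every k ∈ ℕ there exist positive integers p and q such that p·x lies in the domain V_k of the k-th iterate of φ and q·x lies in the domain W_k of the k-th iterate of φ^{-1} (where V_k = { v ∈ V : φ^j(v) ∈ V for all 0 ≤ j < k } and W_k = { w ∈ W : φ^{-j}(w) ∈ W for all 0 ≤ j < k }). -/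
/-- `IntRel V W φ v w`: `v ∈ V` and `φ (v) = w` (as elements of `M = ℤ^n`). -/
def IntRel {n : ℕ} (V W : AddSubgroup (Fin n → ℤ)) (φ : V ≃+ W)
    (v w : Fin n → ℤ) : Prop :=
  ∃ hv : v ∈ V, ((φ ⟨v, hv⟩ : W) : Fin n → ℤ) = w

/-- `IntRelIter V W φ k v w`: the `k`-th iterate of `φ` is defined at `v` (i.e. `v ∈ V_k`,
that is `φ^j (v) ∈ V` for all `0 ≤ j < k`) and `φ^k (v) = w`.  In particular
`V_k = {v | ∃ w, IntRelIter V W φ k v w}` and `W_k = φ^k (V_k) = {w | ∃ v, IntRelIter V W φ k v w}`. -/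
def IntRelIter {n : ℕ} (V W : AddSubgroup (Fin n → ℤ)) (φ : V ≃+ W) :
    ℕ → (Fin n → ℤ) → (Fin n → ℤ) → Prop
  | 0, v, w => v = w
  | (k + 1), v, w => ∃ u, IntRel V W φ v u ∧ IntRelIter V W φ k u w


set_option synthInstance.maxHeartbeats 1000000

namespace Aux

lemma embQ_add {n : ℕ} (v w : Fin n → ℤ) : embQ n (v + w) = embQ n v + embQ n w := by
  funext i; simp [embQ]

lemma embQ_zero {n : ℕ} : embQ n 0 = 0 := by funext i; simp [embQ]

lemma embQ_neg {n : ℕ} (v : Fin n → ℤ) : embQ n (-v) = -embQ n v := by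
  funext i; simp [embQ]

lemma embQ_zsmul {n : ℕ} (c : ℤ) (v : Fin n → ℤ) : embQ n (c • v) = c • embQ n v := by
  funext i
  simp only [embQ, Pi.smul_apply, zsmul_eq_mul]
  push_cast
  ring

lemma embQ_injective {n : ℕ} : Function.Injective (embQ n) := by
  intro a b h
  funext i
  have := congrFun h i
  simpa [embQ] using this

lemma zsmul_cast {n : ℕ} (c : ℤ) (x : Fin n → ℚ) : c • x = (c:ℚ) • x :=
  (Int.cast_smul_eq_zsmul ℚ c x).symm

lemma smul_cancel {n : ℕ} {c : ℤ} (hc : c ≠ 0) {x y : Fin n → ℚ} (h : c • x = c • y) :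
    x = y := by
  rw [zsmul_cast, zsmul_cast] at h
  have hc' : (c:ℚ) ≠ 0 := Int.cast_ne_zero.mpr hc
  have := congrArg (fun z => (c:ℚ)⁻¹ • z) h
  simpa [smul_smul, inv_mul_cancel₀ hc'] using this

lemma mem_qSpan_of {n : ℕ} {U : AddSubgroup (Fin n → ℤ)} {y : Fin n → ℚ} {m : ℤ}
    (hm : m ≠ 0) {u : Fin n → ℤ} (hu : u ∈ U) (h : embQ n u = m • y) :
    y ∈ qSpan n U := by
  have h1 : embQ n u ∈ qSpan n U :=
    Submodule.subset_span ⟨u, hu, rfl⟩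
  have hm' : (m:ℚ) ≠ 0 := Int.cast_ne_zero.mpr hm
  have : y = (m:ℚ)⁻¹ • embQ n u := by
    rw [h, zsmul_cast, smul_smul, inv_mul_cancel₀ hm', one_smul]
  rw [this]
  exact Submodule.smul_mem _ _ h1

lemma mem_qSpan_iff {n : ℕ} (U : AddSubgroup (Fin n → ℤ)) (y : Fin n → ℚ) :
    y ∈ qSpan n U ↔ ∃ m : ℤ, 0 < m ∧ ∃ u ∈ U, embQ n u = m • y := by
  constructor
  · intro hy
    induction hy using Submodule.span_induction with
    | mem z hz =>
      obtain ⟨u, hu, rfl⟩ := hz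
      exact ⟨1, one_pos, u, hu, by rw [one_smul]⟩
    | zero => exact ⟨1, one_pos, 0, zero_mem U, by rw [embQ_zero, one_smul]⟩
    | add a b _ _ iha ihb =>
      obtain ⟨m, hm, u, hu, hmu⟩ := iha
      obtain ⟨m', hm', u', hu', hmu'⟩ := ihb
      refine ⟨m * m', mul_pos hm hm', m' • u + m • u', ?_, ?_⟩
      · exact add_mem (zsmul_mem hu m') (zsmul_mem hu' m)
      · rw [embQ_add, embQ_zsmul, embQ_zsmul, hmu, hmu', smul_add,
          smul_smul, smul_smul]
        ring_nf
    | smul q a _ iha =>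
      obtain ⟨m, hm, u, hu, hmu⟩ := iha
      refine ⟨m * q.den, mul_pos hm (by exact_mod_cast q.pos), q.num • u,
        zsmul_mem hu _, ?_⟩
      rw [embQ_zsmul, hmu, zsmul_cast, zsmul_cast, zsmul_cast (m * (q.den:ℤ)),
        smul_smul, smul_smul]
      congr 1
      push_cast
      rw [mul_assoc, Rat.den_mul_eq_num]
      ring
  · rintro ⟨m, hm, u, hu, h⟩
    exact mem_qSpan_of hm.ne' hu h

lemma mem_qSpan_inf {n : ℕ} {V W : AddSubgroup (Fin n → ℤ)} {x : Fin n → ℚ}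
    (hv : x ∈ qSpan n V) (hw : x ∈ qSpan n W) : x ∈ qSpan n (V ⊓ W) := by
  rw [mem_qSpan_iff] at hv hw
  obtain ⟨m, hm, u, hu, hmu⟩ := hv
  obtain ⟨m', hm', u', hu', hmu'⟩ := hw
  refine mem_qSpan_of (m := m * m') (by positivity) (u := m' • u) ?_ ?_
  · refine ⟨zsmul_mem hu m', ?_⟩
    have : m' • u = m • u' := by
      apply embQ_injective
      rw [embQ_zsmul, embQ_zsmul, hmu, hmu', smul_smul, smul_smul, mul_comm]
    rw [this]
    exact zsmul_mem hu' m
  · rw [embQ_zsmul, hmu, smul_smul, mul_comm]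

lemma qSpan_mono {n : ℕ} {U U' : AddSubgroup (Fin n → ℤ)} (h : U ≤ U') :
    qSpan n U ≤ qSpan n U' :=
  Submodule.span_mono (Set.image_mono h)


section RelQ
variable {n : ℕ} {V W : AddSubgroup (Fin n → ℤ)} {φ : V ≃+ W}

lemma coe_zsmulV (a : ℤ) (v : V) : ((a • v : V) : Fin n → ℤ) = a • (v : Fin n → ℤ) := rfl

lemma coe_zsmulW (a : ℤ) (w : W) : ((a • w : W) : Fin n → ℤ) = a • (w : Fin n → ℤ) := rfl

lemma relQ_zero : RelQ V W φ 0 0 := by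
  refine ⟨1, one_ne_zero, 0, ?_, ?_⟩ <;>
    simp [embQ_zero, map_zero]

lemma relQ_add {x y x' y' : Fin n → ℚ} (h : RelQ V W φ x y) (h' : RelQ V W φ x' y') :
    RelQ V W φ (x + x') (y + y') := by
  obtain ⟨p, hp, v, hv1, hv2⟩ := h
  obtain ⟨p', hp', v', hv1', hv2'⟩ := h'
  refine ⟨p * p', mul_ne_zero hp hp', p' • v + p • v', ?_, ?_⟩
  · push_cast [coe_zsmulV]
    rw [embQ_add, embQ_zsmul, embQ_zsmul, hv1, hv1', smul_add, smul_smul, smul_smul,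
      mul_comm p' p]
  · rw [map_add, map_zsmul, map_zsmul]
    push_cast [coe_zsmulW]
    rw [embQ_add, embQ_zsmul, embQ_zsmul, hv2, hv2', smul_add, smul_smul, smul_smul,
      mul_comm p' p]

lemma relQ_qsmul {x y : Fin n → ℚ} (q : ℚ) (h : RelQ V W φ x y) :
    RelQ V W φ (q • x) (q • y) := by
  obtain ⟨p, hp, v, hv1, hv2⟩ := h
  have hd : ((q.den : ℤ) : ℚ) ≠ 0 := by exact_mod_cast q.den_ne_zero
  refine ⟨p * q.den, mul_ne_zero hp (by exact_mod_cast q.den_ne_zero), q.num • v, ?_, ?_⟩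
  · rw [coe_zsmulV, embQ_zsmul, hv1, zsmul_cast, zsmul_cast, zsmul_cast (p * q.den),
      smul_smul, smul_smul]
    congr 1
    push_cast
    rw [mul_assoc, Rat.den_mul_eq_num]
    ring
  · rw [map_zsmul, coe_zsmulW, embQ_zsmul, hv2, zsmul_cast, zsmul_cast,
      zsmul_cast (p * q.den), smul_smul, smul_smul]
    congr 1
    push_cast
    rw [mul_assoc, Rat.den_mul_eq_num]
    ring

/-- wlog form: the clearing denominator can be taken positive. -/
lemma relQ_pos {x y : Fin n → ℚ} (h : RelQ V W φ x y) :
    ∃ p : ℤ, 0 < p ∧ ∃ v : V, embQ n (v : Fin n → ℤ) = p • x ∧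
      embQ n ((φ v : W) : Fin n → ℤ) = p • y := by
  obtain ⟨p, hp, v, hv1, hv2⟩ := h
  rcases lt_or_gt_of_ne hp with hneg | hpos
  · refine ⟨-p, by omega, -v, ?_, ?_⟩
    · rw [AddSubgroup.coe_neg, embQ_neg, hv1, neg_smul]
    · rw [map_neg, AddSubgroup.coe_neg, embQ_neg, hv2, neg_smul]
  · exact ⟨p, hpos, v, hv1, hv2⟩

lemma relQ_subtype_eq {v v' : V} {p p' : ℤ} (_hp : p ≠ 0) (_hp' : p' ≠ 0)
    {x : Fin n → ℚ} (h1 : embQ n (v : Fin n → ℤ) = p • x)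
    (h1' : embQ n (v' : Fin n → ℤ) = p' • x) : p' • v = p • v' := by
  have : embQ n ((p' • v : V) : Fin n → ℤ) = embQ n ((p • v' : V) : Fin n → ℤ) := by
    rw [coe_zsmulV, coe_zsmulV, embQ_zsmul, embQ_zsmul, h1, h1', smul_smul, smul_smul,
      mul_comm]
  exact Subtype.ext (embQ_injective (by exact_mod_cast this))

lemma relQ_funct {x y y' : Fin n → ℚ} (h : RelQ V W φ x y) (h' : RelQ V W φ x y') :
    y = y' := by
  obtain ⟨p, hp, v, hv1, hv2⟩ := h
  obtain ⟨p', hp', v', hv1', hv2'⟩ := h'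
  have heq : p' • v = p • v' := relQ_subtype_eq hp hp' hv1 hv1'
  have : p' • φ v = p • φ v' := by
    rw [← map_zsmul, ← map_zsmul, heq]
  have hc : embQ n (((p' • φ v : W)) : Fin n → ℤ) = embQ n ((p • φ v' : W) : Fin n → ℤ) := by
    rw [this]
  rw [coe_zsmulW, coe_zsmulW, embQ_zsmul, embQ_zsmul, hv2, hv2', smul_smul, smul_smul] at hc
  exact smul_cancel (mul_ne_zero hp' hp) (by rwa [mul_comm p p'] at hc)

lemma relQ_inj {x x' y : Fin n → ℚ} (h : RelQ V W φ x y) (h' : RelQ V W φ x' y) :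
    x = x' := by
  obtain ⟨p, hp, v, hv1, hv2⟩ := h
  obtain ⟨p', hp', v', hv1', hv2'⟩ := h'
  have heq : p' • φ v = p • φ v' := by
    have : embQ n ((p' • φ v : W) : Fin n → ℤ) = embQ n ((p • φ v' : W) : Fin n → ℤ) := by
      rw [coe_zsmulW, coe_zsmulW, embQ_zsmul, embQ_zsmul, hv2, hv2', smul_smul, smul_smul,
        mul_comm]
    exact Subtype.ext (embQ_injective this)
  have heqv : p' • v = p • v' := by
    have h2 := congrArg φ.symm heq
    rwa [map_zsmul, map_zsmul, φ.symm_apply_apply, φ.symm_apply_apply] at h2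
  have hc : embQ n ((p' • v : V) : Fin n → ℤ) = embQ n ((p • v' : V) : Fin n → ℤ) := by
    rw [heqv]
  rw [coe_zsmulV, coe_zsmulV, embQ_zsmul, embQ_zsmul, hv1, hv1', smul_smul, smul_smul] at hc
  exact smul_cancel (mul_ne_zero hp' hp) (by rwa [mul_comm p p'] at hc)

lemma relQ_total {x : Fin n → ℚ} (hx : x ∈ qSpan n V) :
    ∃ y, RelQ V W φ x y ∧ y ∈ qSpan n W := by
  rw [mem_qSpan_iff] at hx
  obtain ⟨m, hm, u, hu, hmu⟩ := hx
  refine ⟨(m:ℚ)⁻¹ • embQ n ((φ ⟨u, hu⟩ : W) : Fin n → ℤ), ⟨m, hm.ne', ⟨u, hu⟩, hmu, ?_⟩, ?_⟩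
  · rw [zsmul_cast, smul_smul, mul_inv_cancel₀ (by exact_mod_cast hm.ne'), one_smul]
  · exact Submodule.smul_mem _ _ (Submodule.subset_span ⟨_, (φ ⟨u, hu⟩).2, rfl⟩)

end RelQ

section IntRel
variable {n : ℕ} {V W : AddSubgroup (Fin n → ℤ)} {φ : V ≃+ W}

lemma intRel_smul (c : ℤ) {v w : Fin n → ℤ} (h : IntRel V W φ v w) :
    IntRel V W φ (c • v) (c • w) := by
  obtain ⟨hv, hw⟩ := h
  refine ⟨zsmul_mem hv c, ?_⟩
  have : (⟨c • v, zsmul_mem hv c⟩ : V) = c • (⟨v, hv⟩ : V) := rfl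
  rw [this, map_zsmul, coe_zsmulW, hw]

lemma intRelIter_smul (c : ℤ) {k : ℕ} {v w : Fin n → ℤ}
    (h : IntRelIter V W φ k v w) : IntRelIter V W φ k (c • v) (c • w) := by
  induction k generalizing v with
  | zero => rw [show IntRelIter V W φ 0 v w from h]; rfl
  | succ k ih =>
    obtain ⟨u, h1, h2⟩ := h
    exact ⟨c • u, intRel_smul c h1, ih h2⟩

lemma intRelIter_snoc {k : ℕ} {v w u : Fin n → ℤ} (h : IntRelIter V W φ k v w)
    (h2 : IntRel V W φ w u) : IntRelIter V W φ (k + 1) v u := by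
  induction k generalizing v with
  | zero => exact ⟨u, (show v = w from h) ▸ h2, rfl⟩
  | succ k ih =>
    obtain ⟨t, ht1, ht2⟩ := h
    exact ⟨t, ht1, ih ht2⟩

lemma intRelIter_chain {k : ℕ} {v w : Fin n → ℤ} :
    IntRelIter V W φ k v w ↔
      ∃ u : ℕ → (Fin n → ℤ), u 0 = v ∧ u k = w ∧
        ∀ j < k, IntRel V W φ (u j) (u (j + 1)) := by
  constructor
  · intro h
    induction k generalizing v with
    | zero => exact ⟨fun _ => v, rfl, (show v = w from h) ▸ rfl, fun j hj => absurd hj (by omega)⟩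
    | succ k ih =>
      obtain ⟨t, ht1, ht2⟩ := h
      obtain ⟨u', hu0, huk, hurel⟩ := ih ht2
      refine ⟨fun j => Nat.rec v (fun j _ => u' j) j, rfl, huk, ?_⟩
      intro j hj
      cases j with
      | zero => simpa [hu0] using ht1
      | succ j => exact hurel j (by omega)
  · intro ⟨u, hu0, huk, hurel⟩
    induction k generalizing v u with
    | zero => rw [show IntRelIter V W φ 0 v w = (v = w) from rfl, ← hu0, huk]
    | succ k ih =>
      refine ⟨u 1, hu0 ▸ hurel 0 (by omega), ?_⟩
      exact ih (fun j => u (j + 1)) rfl huk (fun j hj => hurel (j + 1) (by omega))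

end IntRel

section Chain
variable {n : ℕ} (V W : AddSubgroup (Fin n → ℤ)) (φ : V ≃+ W)

/-- `C_k`: elements admitting a backward chain of length `k` inside `(V ∩ W) ⊗ ℚ`. -/
def chainC (k : ℕ) : Submodule ℚ (Fin n → ℚ) where
  carrier := {x | ∃ z : ℕ → (Fin n → ℚ), z 0 = x ∧ (∀ j ≤ k, z j ∈ qSpan n (V ⊓ W)) ∧
      ∀ j < k, RelQ V W φ (z (j + 1)) (z j)}
  zero_mem' := ⟨0, rfl, fun _ _ => Submodule.zero_mem _, fun _ _ => relQ_zero⟩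
  add_mem' := by
    rintro a b ⟨z, hz0, hzm, hzr⟩ ⟨z', hz0', hzm', hzr'⟩
    exact ⟨z + z', by simp [hz0, hz0'], fun j hj => Submodule.add_mem _ (hzm j hj) (hzm' j hj),
      fun j hj => relQ_add (hzr j hj) (hzr' j hj)⟩
  smul_mem' := by
    rintro q a ⟨z, hz0, hzm, hzr⟩
    exact ⟨fun j => q • z j, by simp [hz0], fun j hj => Submodule.smul_mem _ _ (hzm j hj),
      fun j hj => relQ_qsmul q (hzr j hj)⟩

variable {V W φ}

lemma chainC_mono {k m : ℕ} (h : k ≤ m) : chainC V W φ m ≤ chainC V W φ k := by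
  rintro x ⟨z, hz0, hzm, hzr⟩
  exact ⟨z, hz0, fun j hj => hzm j (hj.trans h), fun j hj => hzr j (lt_of_lt_of_le hj h)⟩

lemma chainC_le_qSpan (k : ℕ) : chainC V W φ k ≤ qSpan n (V ⊓ W) := by
  rintro x ⟨z, hz0, hzm, _⟩
  exact hz0 ▸ hzm 0 (Nat.zero_le _)

lemma dset_subset_chainC {x : Fin n → ℚ} (hx : x ∈ DSet V W φ) (k : ℕ) :
    x ∈ chainC V W φ k := by
  obtain ⟨xs, h0, hm, hr⟩ := hx
  exact ⟨xs, h0, fun j _ => hm j, fun j _ => hr j⟩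

lemma chainC_step {k : ℕ} {x : Fin n → ℚ} (hx : x ∈ chainC V W φ (k + 1)) :
    ∃ y ∈ chainC V W φ k, RelQ V W φ y x := by
  obtain ⟨z, hz0, hzm, hzr⟩ := hx
  refine ⟨z 1, ⟨fun j => z (j + 1), rfl, fun j hj => hzm (j + 1) (by omega),
    fun j hj => hzr (j + 1) (by omega)⟩, hz0 ▸ hzr 0 (by omega)⟩

lemma chainC_stab : ∃ N : ℕ, ∀ m, N ≤ m → chainC V W φ m = chainC V W φ N := by
  have hne : (Set.range fun k => Module.finrank ℚ (chainC V W φ k)).Nonempty :=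
    ⟨_, ⟨0, rfl⟩⟩
  obtain ⟨N, hN⟩ := Nat.sInf_mem hne
  refine ⟨N, fun m hm => ?_⟩
  refine Submodule.eq_of_le_of_finrank_le (chainC_mono hm) ?_
  exact hN.le.trans (Nat.sInf_le ⟨m, rfl⟩)

/-- Key finite-dimensionality argument: if every element of a subspace `C ⊆ V ⊗ ℚ` is a
`φ_ℚ`-image of an element of `C`, then `φ_ℚ` maps `C` into itself. -/
lemma key (C : Submodule ℚ (Fin n → ℚ)) (hV : C ≤ qSpan n V)
    (hstep : ∀ x ∈ C, ∃ y ∈ C, RelQ V W φ y x) :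
    ∀ x ∈ C, ∃ y ∈ C, RelQ V W φ x y := by
  classical
  let S : Submodule ℚ (Fin n → ℚ) :=
    { carrier := {y | ∃ x ∈ C, RelQ V W φ x y}
      zero_mem' := ⟨0, Submodule.zero_mem _, relQ_zero⟩
      add_mem' := by
        rintro a b ⟨u, hu, hru⟩ ⟨u', hu', hru'⟩
        exact ⟨u + u', Submodule.add_mem _ hu hu', relQ_add hru hru'⟩
      smul_mem' := by
        rintro q a ⟨u, hu, hru⟩
        exact ⟨q • u, Submodule.smul_mem _ _ hu, relQ_qsmul q hru⟩ }
  have hCS : C ≤ S := by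
    intro x hx
    obtain ⟨y, hy, hr⟩ := hstep x hx
    exact ⟨y, hy, hr⟩
  have hex : ∀ y : S, ∃ x : C, RelQ V W φ (x : Fin n → ℚ) (y : Fin n → ℚ) := by
    rintro ⟨y, u, hu, hru⟩
    exact ⟨⟨u, hu⟩, hru⟩
  choose f hf using hex
  have hadd : ∀ y y' : S, f (y + y') = f y + f y' := by
    intro y y'
    apply Subtype.ext
    refine relQ_inj (hf (y + y')) ?_
    have := relQ_add (hf y) (hf y')
    simpa using this
  have hsmul : ∀ (q : ℚ) (y : S), f (q • y) = q • f y := by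
    intro q y
    apply Subtype.ext
    refine relQ_inj (hf (q • y)) ?_
    have := relQ_qsmul q (hf y)
    simpa using this
  let g : S →ₗ[ℚ] C := { toFun := f, map_add' := hadd, map_smul' := hsmul }
  have hginj : Function.Injective g := by
    intro y y' h
    apply Subtype.ext
    have h1 := hf y
    have h2 := hf y'
    rw [show f y = f y' from h] at h1
    exact relQ_funct h1 h2
  have hrank : Module.finrank ℚ S ≤ Module.finrank ℚ C :=
    LinearMap.finrank_le_finrank_of_injective hginj
  have hSC : C = S := Submodule.eq_of_le_of_finrank_le hCS hrank
  intro x hx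
  obtain ⟨y, hr, _⟩ := relQ_total (φ := φ) (hV hx)
  have : y ∈ S := ⟨x, hx, hr⟩
  exact ⟨y, hSC ▸ this, hr⟩

end Chain

section Main
variable {n : ℕ} {V W : AddSubgroup (Fin n → ℤ)} {φ : V ≃+ W}

/-- Clearing denominators along a forward rational chain gives integral forward iterates. -/
lemma fwd : ∀ (k : ℕ) (y : ℕ → (Fin n → ℚ)) (_ : ∀ j < k, RelQ V W φ (y j) (y (j + 1)))
    (v0 : Fin n → ℤ) (p0 : ℤ) (_ : 0 < p0) (_ : embQ n v0 = p0 • y 0),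
    ∃ p : ℤ, 0 < p ∧ ∃ w, IntRelIter V W φ k (p • v0) w := by
  intro k
  induction k with
  | zero =>
    intro y _ v0 p0 _ _
    exact ⟨1, one_pos, 1 • v0, rfl⟩
  | succ k ih =>
    intro y hrel v0 p0 hp0 hv0
    obtain ⟨a, ha, v, hv1, hv2⟩ := relQ_pos (hrel 0 (by omega))
    obtain ⟨p', hp', w, hw⟩ := ih (fun j => y (j + 1))
      (fun j hj => hrel (j + 1) (by omega)) ((φ v : W) : Fin n → ℤ) a ha hv2
    have hkey : p0 • (v : Fin n → ℤ) = a • v0 := by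
      apply embQ_injective
      rw [embQ_zsmul, embQ_zsmul, hv1, hv0, smul_smul, smul_smul, mul_comm]
    refine ⟨p' * a, mul_pos hp' ha, p0 • w, ?_⟩
    have hmem : (p' * a) • v0 ∈ V := by
      have : (p' * a) • v0 = (p' * p0) • (v : Fin n → ℤ) := by
        rw [mul_comm p' a, mul_smul, mul_smul, smul_comm a p', ← hkey]
      rw [this]
      exact zsmul_mem v.2 _
    refine ⟨(p' * p0) • ((φ v : W) : Fin n → ℤ), ⟨hmem, ?_⟩, ?_⟩
    · have hsub : (⟨(p' * a) • v0, hmem⟩ : V) = (p' * p0) • v := by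
        apply Subtype.ext
        show (p' * a) • v0 = (p' * p0) • (v : Fin n → ℤ)
        rw [mul_comm p' a, mul_smul, mul_smul, smul_comm a p', ← hkey]
      rw [hsub, map_zsmul, coe_zsmulW]
    · have := intRelIter_smul (φ := φ) p0 hw
      rwa [smul_smul, mul_comm p0 p'] at this

/-- Clearing denominators along a backward rational chain gives integral backward iterates. -/
lemma bwd : ∀ (k : ℕ) (y : ℕ → (Fin n → ℚ)) (_ : ∀ j < k, RelQ V W φ (y (j + 1)) (y j))
    (v0 : Fin n → ℤ) (p0 : ℤ) (_ : 0 < p0) (_ : embQ n v0 = p0 • y 0),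
    ∃ q : ℤ, 0 < q ∧ ∃ w, IntRelIter V W φ k w (q • v0) := by
  intro k
  induction k with
  | zero =>
    intro y _ v0 p0 _ _
    exact ⟨1, one_pos, 1 • v0, rfl⟩
  | succ k ih =>
    intro y hrel v0 p0 hp0 hv0
    obtain ⟨a, ha, v, hv1, hv2⟩ := relQ_pos (hrel 0 (by omega))
    obtain ⟨q', hq', w, hw⟩ := ih (fun j => y (j + 1))
      (fun j hj => hrel (j + 1) (by omega)) ((v : Fin n → ℤ)) a ha hv1
    have hkey : p0 • ((φ v : W) : Fin n → ℤ) = a • v0 := by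
      apply embQ_injective
      rw [embQ_zsmul, embQ_zsmul, hv2, hv0, smul_smul, smul_smul, mul_comm]
    refine ⟨q' * a, mul_pos hq' ha, p0 • w, ?_⟩
    have h1 : IntRelIter V W φ k (p0 • w) ((p0 * q') • (v : Fin n → ℤ)) := by
      have := intRelIter_smul (φ := φ) p0 hw
      rwa [smul_smul] at this
    have h2 : IntRel V W φ ((p0 * q') • (v : Fin n → ℤ)) ((q' * a) • v0) := by
      refine ⟨zsmul_mem v.2 _, ?_⟩
      have hsub : (⟨(p0 * q') • (v : Fin n → ℤ), zsmul_mem v.2 _⟩ : V) = (p0 * q') • v :=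
        Subtype.ext rfl
      rw [hsub, map_zsmul, coe_zsmulW]
      rw [mul_comm p0 q', mul_smul, hkey, smul_smul, mul_comm q' a, mul_smul, smul_smul,
        mul_comm]
    exact intRelIter_snoc h1 h2

lemma mem_dset_of_chainC {N : ℕ} (hN : ∀ m, N ≤ m → chainC V W φ m = chainC V W φ N)
    {x : Fin n → ℚ} (hx : x ∈ chainC V W φ N) : x ∈ DSet V W φ := by
  classical
  have hstep : ∀ a : (chainC V W φ N), ∃ b : (chainC V W φ N),
      RelQ V W φ (b : Fin n → ℚ) (a : Fin n → ℚ) := by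
    rintro ⟨a, ha⟩
    have ha' : a ∈ chainC V W φ (N + 1) := by
      rw [hN (N + 1) (by omega)]; exact ha
    obtain ⟨y, hy, hr⟩ := chainC_step ha'
    exact ⟨⟨y, hy⟩, hr⟩
  choose G hG using hstep
  refine ⟨fun k => ((G^[k] ⟨x, hx⟩ : chainC V W φ N) : Fin n → ℚ), by simp, fun k => ?_,
    fun k => ?_⟩
  · exact chainC_le_qSpan N (G^[k] ⟨x, hx⟩).2
  · show RelQ V W φ ((G^[k + 1] ⟨x, hx⟩ : chainC V W φ N) : Fin n → ℚ)
      ((G^[k] ⟨x, hx⟩ : chainC V W φ N) : Fin n → ℚ)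
    rw [Function.iterate_succ_apply']
    exact hG _

lemma exists_fwd_seq {N : ℕ} (hN : ∀ m, N ≤ m → chainC V W φ m = chainC V W φ N)
    {x : Fin n → ℚ} (hx : x ∈ chainC V W φ N) :
    ∃ ys : ℕ → (Fin n → ℚ), ys 0 = x ∧ ∀ j, RelQ V W φ (ys j) (ys (j + 1)) := by
  classical
  have hstep : ∀ z ∈ chainC V W φ N, ∃ y ∈ chainC V W φ N, RelQ V W φ y z := by
    intro z hz
    have hz' : z ∈ chainC V W φ (N + 1) := by
      rw [hN (N + 1) (by omega)]; exact hz
    exact chainC_step hz'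
  have hkey := key (chainC V W φ N)
    (le_trans (chainC_le_qSpan N) (qSpan_mono inf_le_left)) hstep
  have hstep' : ∀ a : (chainC V W φ N), ∃ b : (chainC V W φ N),
      RelQ V W φ (a : Fin n → ℚ) (b : Fin n → ℚ) := by
    rintro ⟨a, ha⟩
    obtain ⟨y, hy, hr⟩ := hkey a ha
    exact ⟨⟨y, hy⟩, hr⟩
  choose G hG using hstep'
  refine ⟨fun k => ((G^[k] ⟨x, hx⟩ : chainC V W φ N) : Fin n → ℚ), by simp, fun j => ?_⟩
  show RelQ V W φ ((G^[j] ⟨x, hx⟩ : chainC V W φ N) : Fin n → ℚ)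
    ((G^[j + 1] ⟨x, hx⟩ : chainC V W φ N) : Fin n → ℚ)
  rw [Function.iterate_succ_apply']
  exact hG _

lemma mem_chainC_of_int (k : ℕ) (x : Fin n → ℤ) (hxV : embQ n x ∈ qSpan n V)
    {q : ℤ} (hq : 0 < q) {w : Fin n → ℤ} (h : IntRelIter V W φ (k + 1) w (q • x)) :
    embQ n x ∈ chainC V W φ k := by
  rw [intRelIter_chain] at h
  obtain ⟨u, hu0, huk, hurel⟩ := h
  have hq' : (q : ℚ) ≠ 0 := Int.cast_ne_zero.mpr hq.ne'
  -- the rational backward chain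
  set z : ℕ → (Fin n → ℚ) := fun j => (q : ℚ)⁻¹ • embQ n (u (k + 1 - j)) with hz
  have hzval : ∀ j, embQ n (u (k + 1 - j)) = q • z j := by
    intro j
    rw [hz]
    simp only [zsmul_cast, smul_smul, mul_inv_cancel₀ hq', one_smul]
  have hz0 : z 0 = embQ n x := by
    rw [hz]
    simp only [Nat.sub_zero, huk, embQ_zsmul, zsmul_cast, smul_smul,
      inv_mul_cancel₀ hq', one_smul]
  -- memberships in V and W of intermediate integral points
  have huV : ∀ i, i ≤ k → u i ∈ V := fun i hi => (hurel i (by omega)).1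
  have huW : ∀ i, 1 ≤ i → i ≤ k + 1 → u i ∈ W := by
    intro i h1 h2
    obtain ⟨i, rfl⟩ : ∃ j, i = j + 1 := ⟨i - 1, by omega⟩
    obtain ⟨hv, hw⟩ := hurel i (by omega)
    rw [← hw]
    exact (φ ⟨u i, hv⟩).2
  have hxW : embQ n x ∈ qSpan n W := by
    refine mem_qSpan_of hq.ne' (huW (k + 1) (by omega) (by omega)) ?_
    rw [huk, embQ_zsmul]
  refine ⟨z, hz0, ?_, ?_⟩
  · intro j hj
    rcases Nat.eq_zero_or_pos j with rfl | hjpos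
    · rw [hz0]
      exact mem_qSpan_inf hxV hxW
    · refine mem_qSpan_of hq.ne' (U := V ⊓ W) ?_ (hzval j)
      exact ⟨huV (k + 1 - j) (by omega), huW (k + 1 - j) (by omega) (by omega)⟩
  · intro j hj
    obtain ⟨hv, hw⟩ := hurel (k - j) (by omega)
    have e1 : k + 1 - (j + 1) = k - j := by omega
    have e2 : k - j + 1 = k + 1 - j := by omega
    refine ⟨q, hq.ne', ⟨u (k - j), hv⟩, ?_, ?_⟩
    · show embQ n (u (k - j)) = q • z (j + 1)
      rw [← e1]
      exact hzval (j + 1)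
    · rw [hw, e2]
      exact hzval j

end Main

end Aux

/-- Proposition 7.1(4): for `x ∈ M`, the image of `x` in `M ⊗ ℚ` belongs to `D_φ` if and
only if for every `k ∈ ℕ` there are positive integers `p, q` such that `p • x` lies in
`V_k` (the domain of `φ^k`) and `q • x` lies in `W_k` (the domain of `φ^{-k}`). -/
theorem statement4 (n : ℕ) (V W : AddSubgroup (Fin n → ℤ)) (φ : V ≃+ W)
    (x : Fin n → ℤ) :
    embQ n x ∈ DSet V W φ ↔
      ∀ k : ℕ, ∃ p q : ℤ, 0 < p ∧ 0 < q ∧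
        (∃ w, IntRelIter V W φ k (p • x) w) ∧
        (∃ w, IntRelIter V W φ k w (q • x)) := by
  constructor
  · intro hx
    obtain ⟨N, hN⟩ := Aux.chainC_stab (V := V) (W := W) (φ := φ)
    have hxC : embQ n x ∈ Aux.chainC V W φ N := Aux.dset_subset_chainC hx N
    obtain ⟨ys, hys0, hysrel⟩ := Aux.exists_fwd_seq hN hxC
    obtain ⟨xs, hxs0, hxsm, hxsrel⟩ := hx
    intro k
    obtain ⟨p, hp, w, hw⟩ := Aux.fwd k ys (fun j _ => hysrel j) x 1 one_pos
      (by rw [hys0, one_smul])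
    obtain ⟨q, hq, w', hw'⟩ := Aux.bwd k xs (fun j _ => hxsrel j) x 1 one_pos
      (by rw [hxs0, one_smul])
    exact ⟨p, q, hp, hq, ⟨w, hw⟩, ⟨w', hw'⟩⟩
  · intro h
    have hxV : embQ n x ∈ qSpan n V := by
      obtain ⟨p, q, hp, hq, ⟨w, hw⟩, -⟩ := h 1
      obtain ⟨u, ⟨hv, _⟩, _⟩ := hw
      exact Aux.mem_qSpan_of hp.ne' hv (Aux.embQ_zsmul p x)
    obtain ⟨N, hN⟩ := Aux.chainC_stab (V := V) (W := W) (φ := φ)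
    have hxC : embQ n x ∈ Aux.chainC V W φ N := by
      obtain ⟨p, q, hp, hq, -, ⟨w, hw⟩⟩ := h (N + 1)
      exact Aux.mem_chainC_of_int N x hxV hq hw
    exact Aux.mem_dset_of_chainC hN hxC
end

section
/- Let k ≥ 1 and let σ, τ : {1,…,k} → ℤ∖{0}. Let G be the group with presentation ⟨a, t_1, …, t_k ∣ t_i a^{σ_i} t_i^{-1} = a^{τ_i} for 1 ≤ i ≤ k⟩. Then for all integers m and n, the elements a^m and a^n are conjugate in G if and only if there exists a finite sequence of integers m_0 = m, m_1, …, m_s = n such that for every i < s there is an index j ∈ {1,…,k} with either (σ_j divides m_i and m_{i+1}·σ_j = m_i·τ_j) or (τ_j divides m_i and m_{i+1}·τ_j = m_i·σ_j). -/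
/-- Generators of the one-vertex GBS group: `Sum.inl ()` is the vertex generator `a`,
and `Sum.inr i` is the stable letter `t_i` of the `i`-th loop. -/
abbrev BSGen (k : ℕ) : Type := Unit ⊕ Fin k

/-- The relators `t_i a^{σ i} t_i⁻¹ a^{-τ i}` of the presentation
`⟨a, t_1, …, t_k ∣ t_i a^{σ_i} t_i⁻¹ = a^{τ_i}⟩`. -/
def BSRels (k : ℕ) (σ τ : Fin k → ℤ) : Set (FreeGroup (BSGen k)) :=
  {r | ∃ i : Fin k,
    r = FreeGroup.of (Sum.inr i) * (FreeGroup.of (Sum.inl ())) ^ (σ i) *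
        (FreeGroup.of (Sum.inr i))⁻¹ * (FreeGroup.of (Sum.inl ())) ^ (-(τ i))}

/-!
The normal forms `a^c t_{j₁}^{±1} a^{c₁} ⋯ t_{j_L}^{±1} a^{c_L}`, in which each `cᵢ` is reduced
modulo the exponent of `a` that can be pushed through the stable letter before it and no pinch
`t_j^{±1} a^0 t_j^{∓1}` occurs, carry a left action of `G`, and every element is the value of its
normal form. So the syllable length `L` of an element is well defined, and right multiplication by
a power of `a` does not change it.

If `g a^m g⁻¹ = a^n` and `g = a^c t^e g'` in normal form, then `g' a^m g'⁻¹ = t^{-e} a^n t^e`.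
Acting on the normal form of `g'`, the left side yields a normal form as long as that of `g'`,
while the right side prepends two syllables unless `n` is divisible by the exponent `σ_j` or `τ_j`
that can pass through `t^{-e}`; in that case `t^{-e} a^n t^e = a^{n'}` and `n' → n` is one step of
a conjugating sequence, and induction on `L` finishes. Conversely, each step is a conjugation by
some `t_j^{±1}`.
-/

open Equiv

theorem Relation.reflTransGen_iff_exists_fin {α : Type*} {r : α → α → Prop} {a b : α} :
    Relation.ReflTransGen r a b ↔
      ∃ s : ℕ, ∃ f : Fin (s + 1) → α, f 0 = a ∧ f (Fin.last s) = b ∧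
        ∀ i : Fin s, r (f i.castSucc) (f i.succ) := by
  constructor
  · intro h
    induction h with
    | refl => exact ⟨0, fun _ => a, rfl, rfl, Fin.elim0⟩
    | @tail _ c _ hbc ih =>
      obtain ⟨s, f, h0, hs, hf⟩ := ih
      refine ⟨s + 1, Fin.snoc f c, by simpa using h0, by simp, Fin.lastCases ?_ fun i => ?_⟩
      · simpa [hs] using hbc
      · rw [Fin.succ_castSucc, Fin.snoc_castSucc, Fin.snoc_castSucc]
        exact hf i
  · rintro ⟨s, f, rfl, rfl, hf⟩
    exact Fin.induction (motive := fun i => Relation.ReflTransGen r (f 0) (f i)) .refl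
      (fun i ih => ih.tail (hf i)) (Fin.last s)

namespace GBS

variable {k : ℕ} {σ τ : Fin k → ℤ} {e : Bool} {j : Fin k}

/-- `⟨j, true, c⟩` is the syllable `t_j a^c` and `⟨j, false, c⟩` is `t_j⁻¹ a^c`; a pair `(c, l)`
stands for `a^c` followed by the syllables of `l` (see `eval`). -/
structure Syllable (k : ℕ) where
  loop : Fin k
  dir : Bool
  exp : ℤ

def Syllable.Pinch (x y : Syllable k) : Prop :=
  x.exp = 0 ∧ y.loop = x.loop ∧ y.dir = !x.dir

instance : DecidableRel (Syllable.Pinch (k := k)) :=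
  fun _ _ => inferInstanceAs (Decidable (_ ∧ _ ∧ _))

section NormalForm

variable (σ τ)

-- `t_j^e a^{modulus e j} = a^{modulus (!e) j} t_j^e`, writing `t_j^false` for `t_j⁻¹`.
def modulus : Bool → Fin k → ℤ
  | true => σ
  | false => τ

def Syllable.IsReduced (x : Syllable k) : Prop :=
  0 ≤ x.exp ∧ x.exp < |modulus σ τ x.dir x.loop|

def IsReducedWord (l : List (Syllable k)) : Prop :=
  (∀ x ∈ l, x.IsReduced σ τ) ∧ l.IsChain fun x y => ¬ x.Pinch y

abbrev NormalForm : Type := {p : ℤ × List (Syllable k) // IsReducedWord σ τ p.2}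

/-- Left multiplication by `t_j^e`: writing `c = u q + r` with `u = modulus e j`, the factor
`a^{u q}` passes through `t_j^e`, and the new syllable `t_j^e a^r` cancels a following `t_j^{-e}`
when `r = 0`. Integer `/` and `%` are Euclidean, so `0 ≤ r < |u|` also for `u < 0`. -/
def stableAct (e : Bool) (j : Fin k) : ℤ × List (Syllable k) → ℤ × List (Syllable k)
  | (c, y :: l) =>
    if Syllable.Pinch ⟨j, e, c % modulus σ τ e j⟩ y then
      (modulus σ τ (!e) j * (c / modulus σ τ e j) + y.exp, l)
    else
      (modulus σ τ (!e) j * (c / modulus σ τ e j), ⟨j, e, c % modulus σ τ e j⟩ :: y :: l)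
  | (c, []) => (modulus σ τ (!e) j * (c / modulus σ τ e j), [⟨j, e, c % modulus σ τ e j⟩])

variable {σ τ}

lemma modulus_ne_zero (hσ : ∀ i, σ i ≠ 0) (hτ : ∀ i, τ i ≠ 0) :
    ∀ e j, modulus σ τ e j ≠ 0
  | true, j => hσ j
  | false, j => hτ j

lemma IsReducedWord.tail {x : Syllable k} {l : List (Syllable k)}
    (h : IsReducedWord σ τ (x :: l)) : IsReducedWord σ τ l :=
  ⟨fun y hy => h.1 y (List.mem_cons_of_mem x hy), h.2.tail⟩

lemma stableAct_cancel (hu : modulus σ τ e j ≠ 0) (q c : ℤ) (l : List (Syllable k)) :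
    stableAct σ τ e j (modulus σ τ e j * q, ⟨j, !e, c⟩ :: l) =
      (modulus σ τ (!e) j * q + c, l) := by
  simp [stableAct, Syllable.Pinch, Int.mul_ediv_cancel_left q hu]

lemma stableAct_push (hu : modulus σ τ e j ≠ 0) (q : ℤ) {r : ℤ} {l : List (Syllable k)}
    (h : IsReducedWord σ τ (⟨j, e, r⟩ :: l)) :
    stableAct σ τ e j (modulus σ τ e j * q + r, l) =
      (modulus σ τ (!e) j * q, ⟨j, e, r⟩ :: l) := by
  obtain ⟨hq, hr⟩ :=
    (Int.ediv_emod_unique'' (q := q) hu).2 ⟨add_comm _ _, h.1 _ List.mem_cons_self⟩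
  cases l with
  | nil => simp [stableAct, hq, hr]
  | cons y l => simp [stableAct, hq, hr, (List.isChain_cons_cons.1 h.2).1]

lemma stableAct_cases (hu : modulus σ τ e j ≠ 0) (c : ℤ) {l : List (Syllable k)}
    (hl : IsReducedWord σ τ l) :
    (∃ q c' l', c = modulus σ τ e j * q ∧ l = ⟨j, !e, c'⟩ :: l') ∨
      ∃ q r, c = modulus σ τ e j * q + r ∧ IsReducedWord σ τ (⟨j, e, r⟩ :: l) := by
  have hc := (Int.mul_ediv_add_emod c (modulus σ τ e j)).symm
  by_cases hpinch : ∃ y ∈ l.head?, Syllable.Pinch ⟨j, e, c % modulus σ τ e j⟩ y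
  · obtain ⟨⟨j', e', c'⟩, hy, hr, hj, he⟩ := hpinch
    dsimp only at hr hj he
    subst hj he
    obtain ⟨l', rfl⟩ : ∃ l', l = _ :: l' := ⟨l.tail, (List.eq_cons_of_mem_head? hy)⟩
    exact .inl ⟨_, c', l', by simpa [hr] using hc, rfl⟩
  · push Not at hpinch
    refine .inr ⟨_, _, hc, ?_, List.isChain_cons.2 ⟨hpinch, hl.2⟩⟩
    rintro x (_ | ⟨_, hx⟩)
    · exact ⟨Int.emod_nonneg _ hu, Int.emod_lt_abs _ hu⟩
    · exact hl.1 x hx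

lemma isReducedWord_stableAct (hu : modulus σ τ e j ≠ 0) {p : ℤ × List (Syllable k)}
    (hp : IsReducedWord σ τ p.2) : IsReducedWord σ τ (stableAct σ τ e j p).2 := by
  obtain ⟨c, l⟩ := p
  rcases stableAct_cases hu c hp with ⟨q, c', l', rfl, rfl⟩ | ⟨q, r, rfl, hr⟩
  · rw [stableAct_cancel hu]
    exact hp.tail
  · rwa [stableAct_push hu q hr]

lemma stableAct_not_stableAct (hσ : ∀ i, σ i ≠ 0) (hτ : ∀ i, τ i ≠ 0)
    {p : ℤ × List (Syllable k)} (hp : IsReducedWord σ τ p.2) :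
    stableAct σ τ (!e) j (stableAct σ τ e j p) = p := by
  have hu := modulus_ne_zero hσ hτ e j
  have hu' := modulus_ne_zero hσ hτ (!e) j
  obtain ⟨c, l⟩ := p
  rcases stableAct_cases hu c hp with ⟨q, c', l', rfl, rfl⟩ | ⟨q, r, rfl, hr⟩
  · rw [stableAct_cancel hu, stableAct_push hu' q hp, Bool.not_not]
  · have := stableAct_cancel hu' q r l
    rw [Bool.not_not] at this
    rw [stableAct_push hu q hr, this]

lemma stableAct_add_modulus (hu : modulus σ τ e j ≠ 0) {c : ℤ} {l : List (Syllable k)}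
    (hl : IsReducedWord σ τ l) :
    stableAct σ τ e j (c + modulus σ τ e j, l) =
      ((stableAct σ τ e j (c, l)).1 + modulus σ τ (!e) j, (stableAct σ τ e j (c, l)).2) := by
  rcases stableAct_cases hu c hl with ⟨q, c', l', rfl, rfl⟩ | ⟨q, r, rfl, hr⟩
  · rw [show modulus σ τ e j * q + modulus σ τ e j = modulus σ τ e j * (q + 1) by ring,
      stableAct_cancel hu, stableAct_cancel hu, Prod.mk.injEq]
    exact ⟨by ring, rfl⟩
  · rw [show modulus σ τ e j * q + r + modulus σ τ e j = modulus σ τ e j * (q + 1) + r by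
        ring, stableAct_push hu _ hr, stableAct_push hu _ hr, Prod.mk.injEq]
    exact ⟨by ring, rfl⟩

lemma length_stableAct_le (p : ℤ × List (Syllable k)) :
    (stableAct σ τ e j p).2.length ≤ p.2.length + 1 := by
  obtain ⟨c, _ | ⟨y, l⟩⟩ := p
  · simp [stableAct]
  · simp only [stableAct]
    split_ifs <;> simp only [List.length_cons] <;> omega

end NormalForm

section Perm

variable (σ τ) in
def shiftPerm (s : ℤ) : Perm (NormalForm σ τ) where
  toFun x := ⟨(x.1.1 + s, x.1.2), x.2⟩
  invFun x := ⟨(x.1.1 - s, x.1.2), x.2⟩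
  left_inv x := Subtype.ext (by simp)
  right_inv x := Subtype.ext (by simp)

@[simp]
lemma shiftPerm_apply_val (s : ℤ) (x : NormalForm σ τ) :
    (shiftPerm σ τ s x).1 = (x.1.1 + s, x.1.2) := rfl

lemma shiftPerm_add (s t : ℤ) : shiftPerm σ τ (s + t) = shiftPerm σ τ s * shiftPerm σ τ t :=
  Equiv.ext fun x => Subtype.ext (by simp [add_comm s, add_assoc])

lemma shiftPerm_one_zpow (s : ℤ) : shiftPerm σ τ 1 ^ s = shiftPerm σ τ s := by
  induction s using Int.induction_on with
  | zero => exact Equiv.ext fun x => Subtype.ext (by simp)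
  | succ n ih => rw [zpow_add_one, ih, shiftPerm_add]
  | pred n ih => rw [zpow_sub_one, ih, mul_inv_eq_iff_eq_mul, ← shiftPerm_add, sub_add_cancel]

variable (hσ : ∀ i, σ i ≠ 0) (hτ : ∀ i, τ i ≠ 0)

def stablePerm (e : Bool) (j : Fin k) : Perm (NormalForm σ τ) where
  toFun x :=
    ⟨stableAct σ τ e j x.1, isReducedWord_stableAct (modulus_ne_zero hσ hτ e j) x.2⟩
  invFun x :=
    ⟨stableAct σ τ (!e) j x.1, isReducedWord_stableAct (modulus_ne_zero hσ hτ _ j) x.2⟩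
  left_inv x := Subtype.ext (stableAct_not_stableAct hσ hτ x.2)
  right_inv x := Subtype.ext (by simpa using stableAct_not_stableAct hσ hτ (e := !e) x.2)

@[simp]
lemma stablePerm_apply_val (e : Bool) (j : Fin k) (x : NormalForm σ τ) :
    (stablePerm hσ hτ e j x).1 = stableAct σ τ e j x.1 := rfl

lemma stablePerm_inv (e : Bool) (j : Fin k) :
    (stablePerm hσ hτ e j)⁻¹ = stablePerm hσ hτ (!e) j :=
  Equiv.ext fun _ => rfl

lemma semiconjBy_stablePerm (e : Bool) (j : Fin k) :
    SemiconjBy (stablePerm hσ hτ e j) (shiftPerm σ τ (modulus σ τ e j))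
      (shiftPerm σ τ (modulus σ τ (!e) j)) :=
  Equiv.ext fun x => Subtype.ext (stableAct_add_modulus (modulus_ne_zero hσ hτ e j) x.2)

end Perm

section Group

variable (σ τ)

local notation "G" => PresentedGroup (BSRels k σ τ)

def gen : G := PresentedGroup.of (Sum.inl ())

def stable (e : Bool) (j : Fin k) : G :=
  if e then PresentedGroup.of (Sum.inr j) else (PresentedGroup.of (Sum.inr j))⁻¹

lemma stable_not (e : Bool) (j : Fin k) : stable σ τ (!e) j = (stable σ τ e j)⁻¹ := by
  cases e <;> simp [stable]

lemma semiconjBy_stable (e : Bool) (j : Fin k) (q : ℤ) :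
    SemiconjBy (stable σ τ e j) (gen σ τ ^ (modulus σ τ e j * q))
      (gen σ τ ^ (modulus σ τ (!e) j * q)) := by
  have hrel : SemiconjBy (stable σ τ true j) (gen σ τ ^ σ j) (gen σ τ ^ τ j) := by
    have := PresentedGroup.one_of_mem (rels := BSRels k σ τ) ⟨j, rfl⟩
    simp only [map_mul, map_zpow, map_inv, zpow_neg, mul_inv_eq_one] at this
    exact (mul_inv_eq_iff_eq_mul.1 this : _)
  simp only [zpow_mul]
  refine SemiconjBy.zpow_right ?_ q
  cases e
  · simpa [stable, modulus] using hrel.inv_symm_left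
  · simpa [stable, modulus] using hrel

def eval (p : ℤ × List (Syllable k)) : G :=
  gen σ τ ^ p.1 * (p.2.map fun x => stable σ τ x.dir x.loop * gen σ τ ^ x.exp).prod

variable {σ τ}

lemma eval_add_left (s c : ℤ) (l : List (Syllable k)) :
    eval σ τ (s + c, l) = gen σ τ ^ s * eval σ τ (c, l) := by
  simp only [eval, zpow_add, mul_assoc]

lemma eval_cons (c : ℤ) (x : Syllable k) (l : List (Syllable k)) :
    eval σ τ (c, x :: l) = gen σ τ ^ c * stable σ τ x.dir x.loop * eval σ τ (x.exp, l) := by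
  simp only [eval, List.map_cons, List.prod_cons, mul_assoc]

lemma eval_stableAct (hu : modulus σ τ e j ≠ 0) {p : ℤ × List (Syllable k)}
    (hp : IsReducedWord σ τ p.2) :
    eval σ τ (stableAct σ τ e j p) = stable σ τ e j * eval σ τ p := by
  obtain ⟨c, l⟩ := p
  rcases stableAct_cases hu c hp with ⟨q, c', l', rfl, rfl⟩ | ⟨q, r, rfl, hr⟩
  · rw [stableAct_cancel hu, eval_add_left, eval_cons, ← mul_assoc, ← mul_assoc,
      (semiconjBy_stable σ τ e j q).eq, stable_not, mul_inv_cancel_right]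
  · rw [stableAct_push hu q hr, eval_cons, eval_add_left, ← mul_assoc,
      (semiconjBy_stable σ τ e j q).eq]

variable (hσ : ∀ i, σ i ≠ 0) (hτ : ∀ i, τ i ≠ 0)

def toPerm : G →* Perm (NormalForm σ τ) :=
  PresentedGroup.toGroup (f := Sum.elim (fun _ => shiftPerm σ τ 1) (stablePerm hσ hτ true)) <|
    by
    rintro _ ⟨j, rfl⟩
    have := (semiconjBy_stablePerm hσ hτ true j).eq
    simp only [modulus] at this
    simp [shiftPerm_one_zpow, this]

lemma toPerm_gen_zpow (c : ℤ) : toPerm hσ hτ (gen σ τ ^ c) = shiftPerm σ τ c := by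
  rw [map_zpow, gen, toPerm, PresentedGroup.toGroup.of, Sum.elim_inl, shiftPerm_one_zpow]

lemma toPerm_stable (e : Bool) (j : Fin k) :
    toPerm hσ hτ (stable σ τ e j) = stablePerm hσ hτ e j := by
  have htrue : toPerm hσ hτ (stable σ τ true j) = stablePerm hσ hτ true j :=
    PresentedGroup.toGroup.of _
  cases e
  · rw [← Bool.not_true, stable_not, map_inv, htrue, stablePerm_inv]
  · exact htrue

lemma eval_toPerm (g : G) (x : NormalForm σ τ) :
    eval σ τ (toPerm hσ hτ g x).1 = g * eval σ τ x.1 := by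
  have hg : g ∈ Subgroup.closure (Set.range PresentedGroup.of) := by simp
  induction hg using Subgroup.closure_induction generalizing x with
  | mem _ hg =>
    obtain ⟨⟨⟩ | j, rfl⟩ := hg
    · rw [← zpow_one (PresentedGroup.of _), ← gen, toPerm_gen_zpow, shiftPerm_apply_val,
        add_comm, eval_add_left]
    · exact eval_stableAct (modulus_ne_zero hσ hτ true j) x.2
  | one => simp
  | mul g h _ _ ihg ihh => rw [map_mul, Perm.mul_apply, ihg, ihh, mul_assoc]
  | inv g _ ih =>
    rw [eq_inv_mul_iff_mul_eq, ← ih, map_inv, ← Perm.mul_apply, mul_inv_cancel, Perm.one_apply]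

def base : NormalForm σ τ := ⟨(0, []), by simp [IsReducedWord]⟩

def normalForm (g : G) : NormalForm σ τ := toPerm hσ hτ g base

lemma normalForm_mul (g h : G) :
    normalForm hσ hτ (g * h) = toPerm hσ hτ g (normalForm hσ hτ h) := by
  rw [normalForm, map_mul, Perm.mul_apply, normalForm]

lemma eval_normalForm (g : G) : eval σ τ (normalForm hσ hτ g).1 = g := by
  rw [normalForm, eval_toPerm]
  simp [base, eval]

lemma normalForm_gen_zpow (m : ℤ) : (normalForm hσ hτ (gen σ τ ^ m)).1 = (m, []) := by
  rw [normalForm, toPerm_gen_zpow, shiftPerm_apply_val]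
  simp [base]

include hσ hτ in
lemma gen_zpow_injective : Function.Injective (gen σ τ ^ · : ℤ → G) := fun m n h => by
  simpa [normalForm_gen_zpow hσ hτ] using congrArg (fun g => (normalForm hσ hτ g).1) h

lemma eq_gen_zpow_of_normalForm {g : G} {c : ℤ} (h : (normalForm hσ hτ g).1 = (c, [])) :
    g = gen σ τ ^ c := by
  rw [← eval_normalForm hσ hτ g, h, eval, List.map_nil, List.prod_nil, mul_one]

lemma isReducedWord_of_val_eq {y : NormalForm σ τ} {c : ℤ} {l : List (Syllable k)}
    (h : y.1 = (c, l)) : IsReducedWord σ τ l := by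
  obtain ⟨_, hy⟩ := y
  subst h
  exact hy

lemma toPerm_stable_apply {y : NormalForm σ τ} {x : Syllable k} {l : List (Syllable k)}
    (hy : y.1 = (x.exp, l)) (hred : IsReducedWord σ τ (x :: l)) :
    (toPerm hσ hτ (stable σ τ x.dir x.loop) y).1 = (0, x :: l) := by
  simpa [toPerm_stable, hy] using stableAct_push (modulus_ne_zero hσ hτ x.dir x.loop) 0 hred

lemma exists_eq_gen_zpow_mul_stable_mul {g : G} {c : ℤ} {x : Syllable k}
    {l : List (Syllable k)} (hg : (normalForm hσ hτ g).1 = (c, x :: l)) :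
    ∃ g', g = gen σ τ ^ c * stable σ τ x.dir x.loop * g' ∧
      (normalForm hσ hτ g').1 = (x.exp, l) := by
  have hred := isReducedWord_of_val_eq hg
  refine ⟨_, (mul_inv_cancel_left _ g).symm, ?_⟩
  suffices normalForm hσ hτ ((gen σ τ ^ c * stable σ τ x.dir x.loop)⁻¹ * g) =
      (⟨(x.exp, l), hred.tail⟩ : NormalForm σ τ) from congrArg Subtype.val this
  rw [normalForm_mul, map_inv]
  refine Perm.inv_eq_iff_eq.2 (Subtype.ext ?_)
  rw [hg, map_mul, Perm.mul_apply, toPerm_gen_zpow, shiftPerm_apply_val,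
    toPerm_stable_apply hσ hτ rfl hred, zero_add]

lemma length_toPerm_le (g : G) (x : NormalForm σ τ) :
    (toPerm hσ hτ g x).1.2.length ≤ (normalForm hσ hτ g).1.2.length + x.1.2.length := by
  suffices ∀ l g c, (normalForm hσ hτ g).1 = (c, l) →
      (toPerm hσ hτ g x).1.2.length ≤ l.length + x.1.2.length from this _ g _ rfl
  intro l
  induction l with
  | nil =>
    intro g c hg
    simp [eq_gen_zpow_of_normalForm hσ hτ hg, toPerm_gen_zpow]
  | cons y l ih =>
    intro g c hg
    obtain ⟨g', rfl, hg'⟩ := exists_eq_gen_zpow_mul_stable_mul hσ hτ hg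
    have := ih g' _ hg'
    have := length_stableAct_le (σ := σ) (τ := τ) (e := y.dir) (j := y.loop)
      (toPerm hσ hτ g' x).1
    simp only [map_mul, Perm.mul_apply, toPerm_gen_zpow, toPerm_stable, shiftPerm_apply_val,
      stablePerm_apply_val, List.length_cons]
    omega

lemma length_normalForm_mul_gen_zpow (g : G) (m : ℤ) :
    (normalForm hσ hτ (g * gen σ τ ^ m)).1.2.length = (normalForm hσ hτ g).1.2.length := by
  have key : ∀ (g : G) (m : ℤ),
      (normalForm hσ hτ (g * gen σ τ ^ m)).1.2.length ≤ (normalForm hσ hτ g).1.2.length :=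
    fun g m => by
      simpa [normalForm_mul, normalForm_gen_zpow] using
        length_toPerm_le hσ hτ g (normalForm hσ hτ (gen σ τ ^ m))
  refine le_antisymm (key g m) ?_
  simpa using key (g * gen σ τ ^ m) (-m)

lemma modulus_dvd_of_semiconjBy {g : G} {x : Syllable k} {l : List (Syllable k)} {m n : ℤ}
    (hg : (normalForm hσ hτ g).1 = (x.exp, l)) (hred : IsReducedWord σ τ (x :: l))
    (h : SemiconjBy g (gen σ τ ^ m)
      ((stable σ τ x.dir x.loop)⁻¹ * gen σ τ ^ n * stable σ τ x.dir x.loop)) :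
    modulus σ τ (!x.dir) x.loop ∣ n := by
  have hpt : (normalForm hσ hτ (g * gen σ τ ^ m)).1 =
      stableAct σ τ (!x.dir) x.loop (n, x :: l) := by
    rw [h.eq, normalForm_mul, ← stable_not, map_mul, map_mul, Perm.mul_apply, Perm.mul_apply,
      toPerm_stable, stablePerm_apply_val, toPerm_gen_zpow, shiftPerm_apply_val,
      toPerm_stable_apply hσ hτ hg hred, zero_add]
  have hlen := length_normalForm_mul_gen_zpow hσ hτ g m
  rcases stableAct_cases (modulus_ne_zero hσ hτ (!x.dir) x.loop) n hred with
    ⟨q, -, -, rfl, -⟩ | ⟨q, r, rfl, hr⟩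
  · exact dvd_mul_right _ _
  · rw [hpt, stableAct_push (modulus_ne_zero hσ hτ _ _) q hr, hg] at hlen
    simp only [List.length_cons] at hlen
    omega

variable (σ τ) in
def ConjStep (m n : ℤ) : Prop :=
  ∃ j e q, m = modulus σ τ e j * q ∧ n = modulus σ τ (!e) j * q

include hσ hτ in
lemma conjStep_iff (m n : ℤ) :
    ConjStep σ τ m n ↔
      ∃ j, (σ j ∣ m ∧ n * σ j = m * τ j) ∨ (τ j ∣ m ∧ n * τ j = m * σ j) := by
  constructor
  · rintro ⟨j, _ | _, q, rfl, rfl⟩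
    · exact ⟨j, .inr ⟨dvd_mul_right _ _, by simp only [modulus, Bool.not_false]; ring⟩⟩
    · exact ⟨j, .inl ⟨dvd_mul_right _ _, by simp only [modulus, Bool.not_true]; ring⟩⟩
  · rintro ⟨j, ⟨⟨q, rfl⟩, h⟩ | ⟨⟨q, rfl⟩, h⟩⟩
    · refine ⟨j, true, q, rfl, mul_right_cancel₀ (hσ j) ?_⟩
      rw [h]; simp only [modulus, Bool.not_true]; ring
    · refine ⟨j, false, q, rfl, mul_right_cancel₀ (hτ j) ?_⟩
      rw [h]; simp only [modulus, Bool.not_false]; ring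

include hσ hτ in
theorem reflTransGen_conjStep_of_semiconjBy {g : G} {m n : ℤ}
    (h : SemiconjBy g (gen σ τ ^ m) (gen σ τ ^ n)) :
    Relation.ReflTransGen (ConjStep σ τ) m n := by
  suffices ∀ l (g : G) c m n, (normalForm hσ hτ g).1 = (c, l) →
      SemiconjBy g (gen σ τ ^ m) (gen σ τ ^ n) → Relation.ReflTransGen (ConjStep σ τ) m n from
    this _ g _ m n rfl h
  intro l
  induction l with
  | nil =>
    intro g c m n hg h
    rw [eq_gen_zpow_of_normalForm hσ hτ hg, SemiconjBy, ← zpow_add, ← zpow_add] at h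
    obtain rfl : m = n := by linarith [gen_zpow_injective hσ hτ h]
    exact .refl
  | cons x l ih =>
    intro g c m n hg h
    obtain ⟨g', rfl, hg'⟩ := exists_eq_gen_zpow_mul_stable_mul hσ hτ hg
    have hred := isReducedWord_of_val_eq hg
    have h' : SemiconjBy g' (gen σ τ ^ m)
        ((stable σ τ x.dir x.loop)⁻¹ * gen σ τ ^ n * stable σ τ x.dir x.loop) := by
      calc g' * gen σ τ ^ m
          = (gen σ τ ^ c * stable σ τ x.dir x.loop)⁻¹ *
              (gen σ τ ^ c * stable σ τ x.dir x.loop * g' * gen σ τ ^ m) := by group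
        _ = _ := by rw [h.eq]; group
    obtain ⟨q, rfl⟩ := modulus_dvd_of_semiconjBy hσ hτ hg' hred h'
    rw [mul_assoc, ← (semiconjBy_stable σ τ x.dir x.loop q).eq, inv_mul_cancel_left] at h'
    exact (ih g' _ m _ hg' h').tail ⟨x.loop, x.dir, q, rfl, rfl⟩

lemma isConj_of_conjStep {m n : ℤ} (h : ConjStep σ τ m n) :
    IsConj (gen σ τ ^ m) (gen σ τ ^ n) := by
  obtain ⟨j, e, q, rfl, rfl⟩ := h
  exact ⟨toUnits (stable σ τ e j), semiconjBy_stable σ τ e j q⟩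

lemma isConj_of_reflTransGen {m n : ℤ} (h : Relation.ReflTransGen (ConjStep σ τ) m n) :
    IsConj (gen σ τ ^ m) (gen σ τ ^ n) := by
  induction h with
  | refl => exact .refl _
  | tail _ hstep ih => exact ih.trans (isConj_of_conjStep hstep)

end Group

end GBS

theorem statement8_general (k : ℕ) (σ τ : Fin k → ℤ)
    (hσ : ∀ i, σ i ≠ 0) (hτ : ∀ i, τ i ≠ 0) (m n : ℤ) :
    IsConj ((PresentedGroup.of (Sum.inl ()) : PresentedGroup (BSRels k σ τ)) ^ m)
        ((PresentedGroup.of (Sum.inl ()) : PresentedGroup (BSRels k σ τ)) ^ n) ↔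
      ∃ s : ℕ, ∃ ms : Fin (s + 1) → ℤ, ms 0 = m ∧ ms (Fin.last s) = n ∧
        ∀ i : Fin s, ∃ j : Fin k,
          (σ j ∣ ms i.castSucc ∧ ms i.succ * σ j = ms i.castSucc * τ j) ∨
          (τ j ∣ ms i.castSucc ∧ ms i.succ * τ j = ms i.castSucc * σ j) := by
  simp only [← GBS.conjStep_iff hσ hτ, ← Relation.reflTransGen_iff_exists_fin]
  exact ⟨fun ⟨u, hu⟩ => GBS.reflTransGen_conjStep_of_semiconjBy hσ hτ hu,
    GBS.isConj_of_reflTransGen⟩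

/-- Proposition 9.1: in the GBS group `G = ⟨a, t_1, …, t_k ∣ t_i a^{σ_i} t_i⁻¹ = a^{τ_i}⟩`
(one vertex, `k` loops, all `σ_i, τ_i` nonzero), the elements `a^m` and `a^n` are
conjugate if and only if there is a conjugating sequence `m_0 = m, m_1, …, m_s = n`:
for each `i < s` there is `j` with either `σ_j ∣ m_i` and `m_{i+1} σ_j = m_i τ_j`, or
`τ_j ∣ m_i` and `m_{i+1} τ_j = m_i σ_j`. -/
theorem statement8 (k : ℕ) (hk : 1 ≤ k) (σ τ : Fin k → ℤ)
    (hσ : ∀ i, σ i ≠ 0) (hτ : ∀ i, τ i ≠ 0) (m n : ℤ) :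
    IsConj ((PresentedGroup.of (Sum.inl ()) : PresentedGroup (BSRels k σ τ)) ^ m)
        ((PresentedGroup.of (Sum.inl ()) : PresentedGroup (BSRels k σ τ)) ^ n) ↔
      ∃ s : ℕ, ∃ ms : Fin (s + 1) → ℤ, ms 0 = m ∧ ms (Fin.last s) = n ∧
        ∀ i : Fin s, ∃ j : Fin k,
          (σ j ∣ ms i.castSucc ∧ ms i.succ * σ j = ms i.castSucc * τ j) ∨
          (τ j ∣ ms i.castSucc ∧ ms i.succ * τ j = ms i.castSucc * σ j) :=
  statement8_general k σ τ hσ hτ m n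
end
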